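/- arXiv:1906.00523 — 5 statements merged into one kernel-verified Lean document; each statement's English description precedes it below -/
import Mathlib

section
/- Let γ : ℝ → S² be a regular curve with geodesic curvature κ, and let c : ℝ → SU(2) be a lift of γ, i.e. Ad(c(s))e₃ = γ(s) and Ad(c(s))e₁ = γ'(s)/|γ'(s)| under the identification su(2) ≅ ℝ³. Then c(s)⁻¹c'(s) = (|γ'(s)|/2)(e₂ + κ(s)e₃) for all s ∈ ℝ. -/
noncomputable section

open Matrix

/-- Euclidean 3-space (as triples of reals). -/
abbrev R3 : Type := Fin 3 → ℝ

/-- The Euclidean inner product on ℝ³. -/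
def dot3 (a b : R3) : ℝ := a 0 * b 0 + a 1 * b 1 + a 2 * b 2

/-- The Euclidean norm on ℝ³. -/
def norm3 (a : R3) : ℝ := Real.sqrt (dot3 a a)

/-- The cross product on ℝ³. -/
def cross3 (a b : R3) : R3 :=
  ![a 1 * b 2 - a 2 * b 1, a 2 * b 0 - a 0 * b 2, a 0 * b 1 - a 1 * b 0]

/-- The determinant of three vectors in ℝ³. -/
def det3 (a b c : R3) : ℝ := dot3 a (cross3 b c)

/-- `γ : ℝ → ℝ³` is a regular curve in the unit sphere S²:
it is smooth, takes values in S², and has nowhere-vanishing derivative. -/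
structure IsRegularCurve (γ : ℝ → R3) : Prop where
  smooth : ContDiff ℝ (⊤ : ℕ∞) γ
  sphere : ∀ s, dot3 (γ s) (γ s) = 1
  reg : ∀ s, deriv γ s ≠ 0

/-- The geodesic curvature `κ(s) = det(γ, γ', γ'')/|γ'|³` of a curve in S². -/
def kappa (γ : ℝ → R3) (s : ℝ) : ℝ :=
  det3 (γ s) (deriv γ s) (deriv (deriv γ) s) / norm3 (deriv γ s) ^ 3

/-- The unit normal `n(s) = (γ × γ')/|γ'|` of a curve in S². -/
def unitNormal (γ : ℝ → R3) (s : ℝ) : R3 :=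
  (norm3 (deriv γ s))⁻¹ • cross3 (γ s) (deriv γ s)

/-- `γ` is closed of period `l > 0`. -/
def HasPeriod (γ : ℝ → R3) (l : ℝ) : Prop := 0 < l ∧ ∀ s, γ (s + l) = γ s

/-- 2×2 complex matrices. -/
abbrev Mat2 := Matrix (Fin 2) (Fin 2) ℂ

def E1 : Mat2 := !![0, Complex.I; Complex.I, 0]
def E2 : Mat2 := !![0, -1; 1, 0]
def E3 : Mat2 := !![Complex.I, 0; 0, -Complex.I]

/-- The identification of ℝ³ with su(2) via the orthonormal basis e₁, e₂, e₃. -/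
def toSu2 (v : R3) : Mat2 := (v 0 : ℂ) • E1 + (v 1 : ℂ) • E2 + (v 2 : ℂ) • E3

/-- The adjoint action `Ad(a)x = a x a⁻¹`. -/
def AdM (a x : Mat2) : Mat2 := a * x * a⁻¹

/-- `c : ℝ → SU(2)` is a lift of the regular curve `γ` in S²:
it is smooth (entrywise), takes values in SU(2), and satisfies
`Ad(c(s))e₃ = γ(s)` and `Ad(c(s))e₁ = γ'(s)/|γ'(s)|` under `toSu2`. -/
structure IsLift (γ : ℝ → R3) (c : ℝ → Mat2) : Prop where
  mem : ∀ s, c s ∈ Matrix.specialUnitaryGroup (Fin 2) ℂ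
  smooth : ∀ i j, ContDiff ℝ (⊤ : ℕ∞) fun s => c s i j
  ad3 : ∀ s, AdM (c s) E3 = toSu2 (γ s)
  ad1 : ∀ s, AdM (c s) E1 = toSu2 ((norm3 (deriv γ s))⁻¹ • deriv γ s)

/-- The entrywise derivative of a matrix-valued curve. -/
def matDeriv (c : ℝ → Mat2) (s : ℝ) : Mat2 :=
  Matrix.of fun i j => deriv (fun t => c t i j) s

/-- The map `f_{γ₁,γ₂}(s₁,s₂) = c₁(0)⁻¹ c₁(s₁) c₂(s₂)⁻¹ c₂(0)` associated to lifts `c₁, c₂`. -/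
def fmap (c1 c2 : ℝ → Mat2) (s1 s2 : ℝ) : Mat2 :=
  (c1 0)⁻¹ * c1 s1 * (c2 s2)⁻¹ * c2 0

/-- `(γ₁, γ₂)` is an admissible pair. -/
structure IsAdmissiblePair (γ1 γ2 : ℝ → R3) : Prop where
  reg1 : IsRegularCurve γ1
  reg2 : IsRegularCurve γ2
  param1 : ∀ s, norm3 (deriv γ1 s) ^ 2 * (1 + kappa γ1 s ^ 2) = 4
  param2 : ∀ s, norm3 (deriv γ2 s) ^ 2 * (1 + kappa γ2 s ^ 2) = 4
  curv : ∀ s1 s2, kappa γ2 s2 < kappa γ1 s1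

/-- The restriction of `γ` to `[a,b]` is a shell. -/
def IsShell (γ : ℝ → R3) (a b : ℝ) : Prop :=
  a < b ∧ Set.InjOn γ (Set.Ico a b) ∧ γ a = γ b ∧
    LinearIndependent ℝ ![deriv γ a, deriv γ b]

/-- A positive shell: `det(γ(a), γ'(a), γ'(b)) < 0`. -/
def IsPositiveShell (γ : ℝ → R3) (a b : ℝ) : Prop :=
  IsShell γ a b ∧ det3 (γ a) (deriv γ a) (deriv γ b) < 0

/-- A negative shell: `det(γ(a), γ'(a), γ'(b)) > 0`. -/
def IsNegativeShell (γ : ℝ → R3) (a b : ℝ) : Prop :=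
  IsShell γ a b ∧ 0 < det3 (γ a) (deriv γ a) (deriv γ b)

/-- The unit sphere S² in ℝ³. -/
def sphere2 : Set R3 := {x | dot3 x x = 1}

/-- The μ-circle with center `o ∈ S²`. -/
def muCircle (μ : ℝ) (o : R3) : Set R3 :=
  {x | dot3 x x = 1 ∧ dot3 x o = μ / Real.sqrt (1 + μ ^ 2)}

/-- The (open) interior domain of the μ-circle with center `o ∈ S²`. -/
def muDisk (μ : ℝ) (o : R3) : Set R3 :=
  {x | dot3 x x = 1 ∧ μ / Real.sqrt (1 + μ ^ 2) < dot3 x o}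

def normalize3 (v : R3) : R3 := (norm3 v)⁻¹ • v

/-- `Δ` is the interior domain of the shell `γ|_{[a,b]}`: it is a connected component of the
complement of the image of the shell in S², and for each `s ∈ (a,b)` the points obtained by
pushing `γ(s)` slightly in the direction `σ • n(s)` (σ = 1 for a positive shell, σ = -1 for a
negative shell) belong to `Δ`. -/
def IsInteriorDomain (γ : ℝ → R3) (a b σ : ℝ) (Δ : Set R3) : Prop :=
  (∃ p ∈ sphere2 \ γ '' Set.Icc a b,
      Δ = connectedComponentIn (sphere2 \ γ '' Set.Icc a b) p) ∧
    ∀ s ∈ Set.Ioo a b, ∃ ε > 0, ∀ δ ∈ Set.Ioo (0 : ℝ) ε,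
      normalize3 (γ s + (σ * δ) • unitNormal γ s) ∈ Δ

/-- The center `o_t = (μ γ(t) + n(t))/√(1+μ²)` of the tangent μ-circle to `γ` at `γ(t)`
on the normal side. -/
def tangentCenter (μ : ℝ) (γ : ℝ → R3) (t : ℝ) : R3 :=
  (Real.sqrt (1 + μ ^ 2))⁻¹ • (μ • γ t + unitNormal γ t)

/-- The rotation of ℝ³ through angle `θ` about the oriented (unit) axis `o`. -/
def rot3 (o : R3) (θ : ℝ) (x : R3) : R3 :=
  Real.cos θ • x + Real.sin θ • cross3 o x + ((1 - Real.cos θ) * dot3 o x) • o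

/-- A closed regular curve of period `l` is generic: every self-intersection is a
transversal double point. -/
def IsGeneric (γ : ℝ → R3) (l : ℝ) : Prop :=
  ∀ s t : ℝ, γ s = γ t → (¬∃ k : ℤ, s - t = k * l) →
    LinearIndependent ℝ ![deriv γ s, deriv γ t] ∧
      ∀ u : ℝ, γ u = γ s → (∃ k : ℤ, u - s = k * l) ∨ (∃ k : ℤ, u - t = k * l)

/-- The number of crossings (self-intersection points) of a closed curve of period `l`. -/
def crossings (γ : ℝ → R3) (l : ℝ) : ℕ :=
  Set.ncard {p : R3 | ∃ s t : ℝ, γ s = p ∧ γ t = p ∧ ¬∃ k : ℤ, s - t = k * l}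

/-- The spherical (geodesic) distance on S³, identified with SU(2):
`dist(A,B) = arccos(Re trace(A Bᴴ)/2)`, which corresponds to the round distance on the
unit sphere S³ ⊂ ℝ⁴. -/
def distS3 (A B : Mat2) : ℝ := Real.arccos ((Matrix.trace (A * Bᴴ)).re / 2)

/-- The extrinsic diameter of the image of the map `f` associated to the lifts `c₁, c₂`. -/
def extDiam (c1 c2 : ℝ → Mat2) : ℝ :=
  sSup {d : ℝ | ∃ s1 s2 u1 u2 : ℝ, d = distS3 (fmap c1 c2 s1 s2) (fmap c1 c2 u1 u2)}

/-- The parallel curve `γ^θ = (cos θ) γ + (sin θ) n`. -/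
def parallelCurve (γ : ℝ → R3) (θ : ℝ) (s : ℝ) : R3 :=
  Real.cos θ • γ s + Real.sin θ • unitNormal γ s

/-- The arclength-type parameter `s(t) = (1/2)∫₀ᵗ |γ'(u)|√(1+κ(u)²) du`. -/
def arcParam (γ : ℝ → R3) (t : ℝ) : ℝ :=
  (1 / 2) * ∫ u in (0 : ℝ)..t, norm3 (deriv γ u) * Real.sqrt (1 + kappa γ u ^ 2)


section Stmt0Aux

/-- Entrywise `HasDerivAt` for a matrix curve. -/
def HasMD (A : ℝ → Mat2) (A' : Mat2) (s : ℝ) : Prop :=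
  ∀ i j, HasDerivAt (fun t => A t i j) (A' i j) s

lemma HasMD.mul {A B : ℝ → Mat2} {A' B' : Mat2} {s : ℝ}
    (hA : HasMD A A' s) (hB : HasMD B B' s) :
    HasMD (fun t => A t * B t) (A' * B s + A s * B') s := by
  intro i j
  have h : (fun t => (A t * B t) i j)
      = fun t => A t i 0 * B t 0 j + A t i 1 * B t 1 j := by
    funext t; rw [Matrix.mul_apply, Fin.sum_univ_two]
  rw [h]
  have h2 := (((hA i 0).mul (hB 0 j))).add ((hA i 1).mul (hB 1 j))
  refine h2.congr_deriv ?_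
  rw [Matrix.add_apply, Matrix.mul_apply, Matrix.mul_apply, Fin.sum_univ_two,
    Fin.sum_univ_two]
  ring

lemma HasMD.mul_const {A : ℝ → Mat2} {A' : Mat2} {s : ℝ} (hA : HasMD A A' s) (M : Mat2) :
    HasMD (fun t => A t * M) (A' * M) s := by
  have hM : HasMD (fun _ => M) 0 s := fun i j => by
    simpa using hasDerivAt_const s (M i j)
  have := hA.mul hM
  simpa using this

lemma hasMD_unique {F : ℝ → Mat2} {A B : Mat2} {s : ℝ}
    (h1 : HasMD F A s) (h2 : HasMD F B s) : A = B := by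
  ext i j; exact (h1 i j).unique (h2 i j)

lemma toSu2_apply (v : R3) (i j : Fin 2) :
    toSu2 v i j = (v 0 : ℂ) * E1 i j + (v 1 : ℂ) * E2 i j + (v 2 : ℂ) * E3 i j := by
  simp [toSu2]

lemma hasMD_toSu2 {v : ℝ → R3} {v' : R3} {s : ℝ}
    (h : ∀ k, HasDerivAt (fun t => v t k) (v' k) s) :
    HasMD (fun t => toSu2 (v t)) (toSu2 v') s := by
  intro i j
  simp only [toSu2_apply]
  exact (((h 0).ofReal_comp.mul_const _).add ((h 1).ofReal_comp.mul_const _)).add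
    ((h 2).ofReal_comp.mul_const _)

lemma toSu2_lin (v : R3) (p q t : ℝ) (a b : R3)
    (h : ∀ k, v k = p * a k + q * b k + t * cross3 a b k) :
    toSu2 v = (p : ℂ) • toSu2 a + (q : ℂ) • toSu2 b + (t : ℂ) • toSu2 (cross3 a b) := by
  ext i j
  simp only [Matrix.add_apply, Matrix.smul_apply, toSu2_apply, smul_eq_mul, h 0, h 1, h 2]
  push_cast
  ring

lemma toSu2_smul (x : ℝ) (v : R3) : toSu2 (x • v) = (x : ℂ) • toSu2 v := by
  ext i j
  simp only [toSu2_apply, Matrix.smul_apply, Pi.smul_apply, smul_eq_mul]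
  push_cast
  ring

lemma toSu2_mulq (a b : R3) :
    toSu2 a * toSu2 b = -((dot3 a b : ℝ) : ℂ) • (1 : Mat2) + toSu2 (cross3 a b) := by
  ext i j
  rw [Matrix.mul_apply, Fin.sum_univ_two]
  fin_cases i <;> fin_cases j <;>
    simp [toSu2_apply, E1, E2, E3, dot3, cross3, Matrix.one_apply] <;>
    push_cast <;> ring_nf <;>
    simp [Complex.I_sq] <;> ring

lemma E3_mul_E1 : E3 * E1 = E2 := by
  ext i j
  rw [Matrix.mul_apply, Fin.sum_univ_two]
  fin_cases i <;> fin_cases j <;> simp [E1, E2, E3] <;> ring_nf <;> simp [Complex.I_sq]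

lemma frame_decomp (a b w : R3) (h1 : dot3 a a = 1) (h2 : dot3 a b = 0) (k : Fin 3) :
    dot3 b b * w k
      = (dot3 b b * dot3 w a) * a k + dot3 w b * b k + det3 a b w * cross3 a b k := by
  have H1 : a 0 * a 0 + a 1 * a 1 + a 2 * a 2 = 1 := h1
  have H2 : a 0 * b 0 + a 1 * b 1 + a 2 * b 2 = 0 := h2
  fin_cases k <;>
    simp only [dot3, det3, cross3, Fin.zero_eta, Fin.mk_one,
      show (⟨2, by omega⟩ : Fin 3) = 2 from rfl, Fin.isValue, Matrix.cons_val_zero,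
      Matrix.cons_val_one, Matrix.head_cons, Matrix.cons_val_two, Matrix.tail_cons]
  · linear_combination ((w 0 * b 0 + w 1 * b 1 + w 2 * b 2) * b 0
        - (b 0 * b 0 + b 1 * b 1 + b 2 * b 2) * w 0) * H1
      + ((a 0 * b 0 + a 1 * b 1 + a 2 * b 2) * w 0
        - (w 0 * b 0 + w 1 * b 1 + w 2 * b 2) * a 0
        - (w 0 * a 0 + w 1 * a 1 + w 2 * a 2) * b 0) * H2
  · linear_combination ((w 0 * b 0 + w 1 * b 1 + w 2 * b 2) * b 1
        - (b 0 * b 0 + b 1 * b 1 + b 2 * b 2) * w 1) * H1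
      + ((a 0 * b 0 + a 1 * b 1 + a 2 * b 2) * w 1
        - (w 0 * b 0 + w 1 * b 1 + w 2 * b 2) * a 1
        - (w 0 * a 0 + w 1 * a 1 + w 2 * a 2) * b 1) * H2
  · linear_combination ((w 0 * b 0 + w 1 * b 1 + w 2 * b 2) * b 2
        - (b 0 * b 0 + b 1 * b 1 + b 2 * b 2) * w 2) * H1
      + ((a 0 * b 0 + a 1 * b 1 + a 2 * b 2) * w 2
        - (w 0 * b 0 + w 1 * b 1 + w 2 * b 2) * a 2
        - (w 0 * a 0 + w 1 * a 1 + w 2 * a 2) * b 2) * H2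

lemma hasDerivAt_dot3 {f h : ℝ → R3} {f' h' : R3} {s : ℝ}
    (hf : ∀ k, HasDerivAt (fun t => f t k) (f' k) s)
    (hh : ∀ k, HasDerivAt (fun t => h t k) (h' k) s) :
    HasDerivAt (fun t => dot3 (f t) (h t)) (dot3 f' (h s) + dot3 (f s) h') s := by
  have := (((hf 0).mul (hh 0)).add ((hf 1).mul (hh 1))).add ((hf 2).mul (hh 2))
  simp only [dot3]
  exact this.congr_deriv (by ring)

end Stmt0Aux

theorem stmt0 (γ : ℝ → R3) (c : ℝ → Mat2)
    (hγ : IsRegularCurve γ) (hc : IsLift γ c) (s : ℝ) :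
    (c s)⁻¹ * matDeriv c s =
      ((norm3 (deriv γ s) / 2 : ℝ) : ℂ) • (E2 + (kappa γ s : ℂ) • E3) := by
  classical
  -- basic notation
  set g : ℝ → R3 := deriv γ with hgdef
  set g2 : ℝ → R3 := deriv g with hg2def
  -- smoothness facts
  have hsm : ContDiff ℝ ((⊤ : ℕ∞) : WithTop ℕ∞) γ := hγ.smooth.of_le (by simp)
  have hγdiff : Differentiable ℝ γ := hγ.smooth.differentiable (by simp)
  have hgsm : ContDiff ℝ ((⊤ : ℕ∞) : WithTop ℕ∞) g := (contDiff_infty_iff_deriv.mp hsm).2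
  have hgdiff : Differentiable ℝ g := hgsm.differentiable (by simp)
  -- componentwise derivatives
  have hγk : ∀ t k, HasDerivAt (fun u => γ u k) (g t k) t := fun t k =>
    hasDerivAt_pi.1 (hγdiff t).hasDerivAt k
  have hgk : ∀ t k, HasDerivAt (fun u => g u k) (g2 t k) t := fun t k =>
    hasDerivAt_pi.1 (hgdiff t).hasDerivAt k
  -- positivity of |γ'|
  have hdotpos : ∀ t, 0 < dot3 (g t) (g t) := by
    intro t
    have hne : g t ≠ 0 := hγ.reg t
    rcases Classical.em (g t 0 = 0 ∧ g t 1 = 0 ∧ g t 2 = 0) with h | h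
    · exfalso; apply hne; funext k; fin_cases k <;> simp [h.1, h.2.1, h.2.2]
    · simp only [dot3]
      rcases Classical.em (g t 0 = 0) with h00 | h00
      · rcases Classical.em (g t 1 = 0) with h11 | h11
        · have h22 : g t 2 ≠ 0 := by tauto
          nlinarith [mul_self_pos.mpr h22, mul_self_nonneg (g t 0), mul_self_nonneg (g t 1)]
        · nlinarith [mul_self_pos.mpr h11, mul_self_nonneg (g t 0), mul_self_nonneg (g t 2)]
      · nlinarith [mul_self_pos.mpr h00, mul_self_nonneg (g t 1), mul_self_nonneg (g t 2)]
  have hrpos : ∀ t, 0 < norm3 (g t) := fun t => Real.sqrt_pos.mpr (hdotpos t)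
  have hr2 : ∀ t, norm3 (g t) ^ 2 = dot3 (g t) (g t) := fun t =>
    Real.sq_sqrt (hdotpos t).le
  set r : ℝ := norm3 (g s) with hrdef
  have hrne : r ≠ 0 := (hrpos s).ne'
  -- derivative of r
  have hdotD : HasDerivAt (fun t => dot3 (g t) (g t))
      (dot3 (g2 s) (g s) + dot3 (g s) (g2 s)) s := hasDerivAt_dot3 (hgk s) (hgk s)
  have hrD : HasDerivAt (fun t => norm3 (g t)) (dot3 (g s) (g2 s) / r) s := by
    have hsq : HasDerivAt Real.sqrt (1 / (2 * Real.sqrt (dot3 (g s) (g s))))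
        (dot3 (g s) (g s)) := Real.hasDerivAt_sqrt (hdotpos s).ne'
    have hcomp := hsq.comp s hdotD
    have heq : (fun t => norm3 (g t)) = Real.sqrt ∘ fun t => dot3 (g t) (g t) := rfl
    rw [heq]
    refine hcomp.congr_deriv ?_
    have hd : dot3 (g2 s) (g s) = dot3 (g s) (g2 s) := by simp only [dot3]; ring
    rw [hd, show Real.sqrt (dot3 (g s) (g s)) = r from rfl]
    field_simp
    ring
  -- determinant of c is 1
  have hdet : ∀ t, (c t).det = 1 := fun t =>
    ((Matrix.mem_specialUnitaryGroup_iff).mp (hc.mem t)).2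
  have hunit : ∀ t, IsUnit (c t).det := fun t => by rw [hdet t]; exact isUnit_one
  have hinvl : ∀ t, (c t)⁻¹ * c t = 1 := fun t => Matrix.nonsing_inv_mul _ (hunit t)
  have hinvr : ∀ t, c t * (c t)⁻¹ = 1 := fun t => Matrix.mul_nonsing_inv _ (hunit t)
  set ci : Mat2 := (c s)⁻¹ with hcidef
  -- derivative of c
  have hcd : HasMD c (matDeriv c s) s := by
    intro i j
    have hd : DifferentiableAt ℝ (fun t => c t i j) s :=
      ((hc.smooth i j).differentiable (by simp)) s
    simpa [matDeriv] using hd.hasDerivAt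
  set D : Mat2 := matDeriv c s with hDdef
  set ω : Mat2 := ci * D with hωdef
  -- rearranged lift equations
  have Eq3 : ∀ t, c t * E3 = toSu2 (γ t) * c t := by
    intro t
    have h := hc.ad3 t
    rw [AdM] at h
    calc c t * E3 = c t * E3 * ((c t)⁻¹ * c t) := by rw [hinvl t, Matrix.mul_one]
      _ = (c t * E3 * (c t)⁻¹) * c t := by rw [Matrix.mul_assoc (c t * E3)]
      _ = toSu2 (γ t) * c t := by rw [h]
  have Eq1 : ∀ t, c t * E1 = toSu2 ((norm3 (g t))⁻¹ • g t) * c t := by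
    intro t
    have h := hc.ad1 t
    rw [AdM] at h
    calc c t * E1 = c t * E1 * ((c t)⁻¹ * c t) := by rw [hinvl t, Matrix.mul_one]
      _ = (c t * E1 * (c t)⁻¹) * c t := by rw [Matrix.mul_assoc (c t * E1)]
      _ = toSu2 ((norm3 (g t))⁻¹ • g t) * c t := by rw [h]
  -- conjugation identities at s
  have F3 : ci * toSu2 (γ s) * c s = E3 := by
    calc ci * toSu2 (γ s) * c s = ci * (toSu2 (γ s) * c s) := Matrix.mul_assoc _ _ _
      _ = ci * (c s * E3) := by rw [← Eq3 s]
      _ = (ci * c s) * E3 := (Matrix.mul_assoc _ _ _).symm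
      _ = E3 := by rw [hcidef, hinvl s, Matrix.one_mul]
  have F1u : ci * toSu2 (r⁻¹ • g s) * c s = E1 := by
    have h := Eq1 s
    rw [← hrdef] at h
    calc ci * toSu2 (r⁻¹ • g s) * c s = ci * (toSu2 (r⁻¹ • g s) * c s) :=
        Matrix.mul_assoc _ _ _
      _ = ci * (c s * E1) := by rw [← h]
      _ = (ci * c s) * E1 := (Matrix.mul_assoc _ _ _).symm
      _ = E1 := by rw [hcidef, hinvl s, Matrix.one_mul]
  have F1 : ci * toSu2 (g s) * c s = ((r : ℂ)) • E1 := by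
    have hgs : g s = r • (r⁻¹ • g s) := by rw [smul_smul, mul_inv_cancel₀ hrne, one_smul]
    rw [hgs, toSu2_smul, Matrix.mul_smul, Matrix.smul_mul, F1u]
  have hdotγγ : ∀ t, dot3 (γ t) (γ t) = 1 := hγ.sphere
  have hdotγg : ∀ t, dot3 (γ t) (g t) = 0 := by
    intro t
    have hD : HasDerivAt (fun u => dot3 (γ u) (γ u))
        (dot3 (g t) (γ t) + dot3 (γ t) (g t)) t := hasDerivAt_dot3 (hγk t) (hγk t)
    have hC : HasDerivAt (fun u => dot3 (γ u) (γ u)) 0 t := by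
      have he : (fun u => dot3 (γ u) (γ u)) = fun _ => (1 : ℝ) := funext hdotγγ
      rw [he]; exact hasDerivAt_const t 1
    have hu := hD.unique hC
    have hsym : dot3 (g t) (γ t) = dot3 (γ t) (g t) := by simp only [dot3]; ring
    rw [hsym] at hu; linarith
  have hdotγg2 : dot3 (γ s) (g2 s) = -dot3 (g s) (g s) := by
    have hD : HasDerivAt (fun u => dot3 (γ u) (g u))
        (dot3 (g s) (g s) + dot3 (γ s) (g2 s)) s := hasDerivAt_dot3 (hγk s) (hgk s)
    have hC : HasDerivAt (fun u => dot3 (γ u) (g u)) 0 s := by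
      have he : (fun u => dot3 (γ u) (g u)) = fun _ => (0 : ℝ) := funext hdotγg
      rw [he]; exact hasDerivAt_const s 0
    have hu := hD.unique hC
    linarith
  -- conjugation multiplicativity
  have conj_mul : ∀ X Y : Mat2, (ci * X * c s) * (ci * Y * c s) = ci * (X * Y) * c s := by
    intro X Y
    calc (ci * X * c s) * (ci * Y * c s) = ci * X * ((c s * ci) * (Y * c s)) := by
          noncomm_ring
      _ = ci * (X * Y) * c s := by rw [hcidef, hinvr s]; noncomm_ring
  have F2 : ci * toSu2 (cross3 (γ s) (g s)) * c s = ((r : ℂ)) • E2 := by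
    have hq := toSu2_mulq (γ s) (g s)
    rw [hdotγg s] at hq
    simp only [Complex.ofReal_zero, neg_zero, zero_smul, zero_add] at hq
    rw [← hq, ← conj_mul, F3, F1, Matrix.mul_smul, E3_mul_E1]
  -- general conjugation of a frame combination
  have conjLin : ∀ (v : R3) (p q t : ℝ),
      (∀ k, v k = p * γ s k + q * g s k + t * cross3 (γ s) (g s) k) →
      ci * toSu2 v * c s
        = (p : ℂ) • E3 + (q : ℂ) • (((r : ℂ)) • E1) + (t : ℂ) • (((r : ℂ)) • E2) := by
    intro v p q t h
    rw [toSu2_lin v p q t (γ s) (g s) h]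
    simp only [Matrix.mul_add, Matrix.add_mul, Matrix.mul_smul, Matrix.smul_mul, F3, F1, F2]
  -- first commutator equation
  have hMD3L : HasMD (fun t => c t * E3) (D * E3) s := hcd.mul_const E3
  have hMD3L' : HasMD (fun t => c t * E3)
      (toSu2 (g s) * c s + toSu2 (γ s) * D) s := by
    have he : (fun t => c t * E3) = fun t => toSu2 (γ t) * c t := funext Eq3
    rw [he]
    exact (hasMD_toSu2 (hγk s)).mul hcd
  have EqD3 : D * E3 = toSu2 (g s) * c s + toSu2 (γ s) * D := hasMD_unique hMD3L hMD3L'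
  have key1 : ω * E3 - E3 * ω = ((r : ℂ)) • E1 := by
    have h1 : ω * E3 = ci * (D * E3) := Matrix.mul_assoc _ _ _
    rw [h1, EqD3, Matrix.mul_add]
    have h2 : ci * (toSu2 (γ s) * D) = E3 * ω := by
      rw [← F3, hωdef]
      calc ci * (toSu2 (γ s) * D) = ci * toSu2 (γ s) * ((c s * ci) * D) := by
            rw [hcidef, hinvr s]; noncomm_ring
        _ = ci * toSu2 (γ s) * c s * (ci * D) := by noncomm_ring
    have h3 : ci * (toSu2 (g s) * c s) = ((r : ℂ)) • E1 := by
      rw [← Matrix.mul_assoc]; exact F1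
    rw [h2, h3]
    abel
  -- second equation: derivative of the unit tangent
  set ρ : ℝ := dot3 (g s) (g2 s) with hρdef
  set w : R3 := fun k => (-(ρ / r) / r ^ 2) * g s k + r⁻¹ * g2 s k with hwdef
  have huD : ∀ k, HasDerivAt (fun t => (norm3 (g t))⁻¹ * g t k) (w k) s := by
    intro k
    have hinv : HasDerivAt (fun t => (norm3 (g t))⁻¹) (-(ρ / r) / r ^ 2) s := by
      have hi := hrD.inv hrne
      exact hi
    have hm := hinv.mul (hgk s k)
    exact hm
  have hMD1L : HasMD (fun t => c t * E1) (D * E1) s := hcd.mul_const E1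
  have hMD1L' : HasMD (fun t => c t * E1)
      (toSu2 w * c s + toSu2 (r⁻¹ • g s) * D) s := by
    have he : (fun t => c t * E1) = fun t => toSu2 ((norm3 (g t))⁻¹ • g t) * c t :=
      funext Eq1
    rw [he]
    have hT : HasMD (fun t => toSu2 ((norm3 (g t))⁻¹ • g t)) (toSu2 w) s := by
      apply hasMD_toSu2
      intro k
      have := huD k
      simpa [Pi.smul_apply, smul_eq_mul] using this
    have := hT.mul hcd
    rw [← hrdef] at this
    exact this
  have EqD1 : D * E1 = toSu2 w * c s + toSu2 (r⁻¹ • g s) * D :=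
    hasMD_unique hMD1L hMD1L'
  -- decompose w in the frame
  have hdetval : det3 (γ s) (g s) (g2 s) = kappa γ s * r ^ 3 := by
    rw [kappa, ← hgdef, ← hg2def, ← hrdef]
    field_simp
  have hwdecomp : ∀ k, w k = (-r) * γ s k + 0 * g s k
      + (kappa γ s) * cross3 (γ s) (g s) k := by
    intro k
    have hfd := frame_decomp (γ s) (g s) (g2 s) (hdotγγ s) (hdotγg s) k
    have hsym1 : dot3 (g2 s) (γ s) = dot3 (γ s) (g2 s) := by simp only [dot3]; ring
    have hsym2 : dot3 (g2 s) (g s) = dot3 (g s) (g2 s) := by simp only [dot3]; ring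
    rw [hsym1, hsym2, hdotγg2, hdetval, ← hr2 s, ← hrdef, ← hρdef] at hfd
    have h3ne : r ^ 3 ≠ 0 := pow_ne_zero 3 hrne
    apply mul_left_cancel₀ h3ne
    have h1 : r ^ 3 * w k = r ^ 2 * g2 s k - ρ * g s k := by
      simp only [hwdef]
      field_simp
      ring
    rw [h1, hfd]
    ring
  have Fw : ci * toSu2 w * c s
      = ((-r : ℝ) : ℂ) • E3 + ((0 : ℝ) : ℂ) • (((r : ℂ)) • E1)
        + ((kappa γ s : ℝ) : ℂ) • (((r : ℂ)) • E2) :=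
    conjLin w (-r) 0 (kappa γ s) hwdecomp
  have key2 : ω * E1 - E1 * ω
      = ((-r : ℝ) : ℂ) • E3 + ((kappa γ s : ℝ) : ℂ) • (((r : ℂ)) • E2) := by
    have h1 : ω * E1 = ci * (D * E1) := Matrix.mul_assoc _ _ _
    rw [h1, EqD1, Matrix.mul_add]
    have h2 : ci * (toSu2 (r⁻¹ • g s) * D) = E1 * ω := by
      rw [← F1u, hωdef]
      calc ci * (toSu2 (r⁻¹ • g s) * D)
          = ci * toSu2 (r⁻¹ • g s) * ((c s * ci) * D) := by
            rw [hcidef, hinvr s]; noncomm_ring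
        _ = ci * toSu2 (r⁻¹ • g s) * c s * (ci * D) := by noncomm_ring
    have h3 : ci * (toSu2 w * c s) = ci * toSu2 w * c s := (Matrix.mul_assoc _ _ _).symm
    rw [h2, h3, Fw]
    simp only [Complex.ofReal_zero, zero_smul, add_zero]
    abel
  -- trace equation
  have hci_entries : ci = !![c s 1 1, -(c s 0 1); -(c s 1 0), c s 0 0] := by
    rw [hcidef, Matrix.inv_def, hdet s, Matrix.adjugate_fin_two]
    simp
  have htr : ω 0 0 + ω 1 1 = 0 := by
    have hdetfun : ∀ t, c t 0 0 * c t 1 1 - c t 0 1 * c t 1 0 = 1 := by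
      intro t
      have hh := hdet t
      rw [Matrix.det_fin_two] at hh
      exact hh
    have hDer : HasDerivAt (fun t => c t 0 0 * c t 1 1 - c t 0 1 * c t 1 0)
        (D 0 0 * c s 1 1 + c s 0 0 * D 1 1 - (D 0 1 * c s 1 0 + c s 0 1 * D 1 0)) s :=
      ((hcd 0 0).mul (hcd 1 1)).sub ((hcd 0 1).mul (hcd 1 0))
    have hC : HasDerivAt (fun t => c t 0 0 * c t 1 1 - c t 0 1 * c t 1 0) 0 s := by
      have he : (fun t => c t 0 0 * c t 1 1 - c t 0 1 * c t 1 0) = fun _ => (1 : ℂ) :=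
        funext hdetfun
      rw [he]; exact hasDerivAt_const s 1
    have h0 := hDer.unique hC
    have hω : ω 0 0 + ω 1 1
        = D 0 0 * c s 1 1 + c s 0 0 * D 1 1 - (D 0 1 * c s 1 0 + c s 0 1 * D 1 0) := by
      rw [hωdef, hci_entries]
      simp [Matrix.mul_apply, Fin.sum_univ_two]
      ring
    rw [hω, h0]
  -- extract entries
  have k1e : ∀ i j, (ω * E3) i j - (E3 * ω) i j = (r : ℂ) * E1 i j := by
    intro i j
    rw [← Matrix.sub_apply, key1, Matrix.smul_apply, smul_eq_mul]
  have k2e : ∀ i j, (ω * E1) i j - (E1 * ω) i j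
      = ((-r : ℝ) : ℂ) * E3 i j + ((kappa γ s : ℝ) : ℂ) * ((r : ℂ) * E2 i j) := by
    intro i j
    rw [← Matrix.sub_apply, key2]
    simp [Matrix.add_apply, Matrix.smul_apply, smul_eq_mul]
  have h01 := k1e 0 1
  have h10 := k1e 1 0
  have h2e := k2e 0 1
  simp [Matrix.mul_apply, Fin.sum_univ_two, E1, E2, E3] at h01 h10 h2e
  have hIne : (2 : ℂ) * Complex.I ≠ 0 := by
    simp [Complex.I_ne_zero]
  have hω01 : ω 0 1 = -((r : ℂ) / 2) := by
    apply mul_left_cancel₀ hIne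
    rw [show (2 : ℂ) * Complex.I * -((r : ℂ)/2) = -((r:ℂ) * Complex.I) by ring]
    linear_combination -h01
  have hω10 : ω 1 0 = (r : ℂ) / 2 := by
    apply mul_left_cancel₀ hIne
    rw [show (2 : ℂ) * Complex.I * ((r : ℂ)/2) = (r:ℂ) * Complex.I by ring]
    linear_combination h10
  have hω00 : ω 0 0 = (kappa γ s : ℂ) * (r : ℂ) * Complex.I / 2 := by
    apply mul_left_cancel₀ hIne
    rw [show (2 : ℂ) * Complex.I * ((kappa γ s : ℂ) * (r : ℂ) * Complex.I / 2)
        = (kappa γ s : ℂ) * (r : ℂ) * (Complex.I * Complex.I) by ring,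
      Complex.I_mul_I]
    linear_combination h2e + Complex.I * htr
  have hω11 : ω 1 1 = -((kappa γ s : ℂ) * (r : ℂ) * Complex.I / 2) := by
    rw [← hω00]; linear_combination htr
  ext i j
  fin_cases i <;> fin_cases j <;>
    simp [hω00, hω01, hω10, hω11, E2, E3] <;>
    push_cast <;> ring_nf
end
end

section
/- Let (γ₁,γ₂) and (γ̄₁,γ̄₂) be admissible pairs of regular curves in S² admitting lifts. Then there exist rotations α₁, α₂ ∈ SO(3) with α₁(γ₁(s)) = γ̄₁(s) and α₂(γ₂(s)) = γ̄₂(s) for all s ∈ ℝ if and only if f_{γ₁,γ₂}(s₁,s₂) = f_{γ̄₁,γ̄₂}(s₁,s₂) for all (s₁,s₂) ∈ ℝ². -/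
noncomputable section

open Matrix

namespace Stmt2Aux

open Matrix

lemma su2_star_mul {a : Mat2} (ha : a ∈ Matrix.specialUnitaryGroup (Fin 2) ℂ) :
    star a * a = 1 :=
  Matrix.mem_unitaryGroup_iff'.mp (Matrix.mem_specialUnitaryGroup_iff.mp ha).1

lemma su2_mul_star {a : Mat2} (ha : a ∈ Matrix.specialUnitaryGroup (Fin 2) ℂ) :
    a * star a = 1 :=
  Matrix.mem_unitaryGroup_iff.mp (Matrix.mem_specialUnitaryGroup_iff.mp ha).1

lemma su2_det {a : Mat2} (ha : a ∈ Matrix.specialUnitaryGroup (Fin 2) ℂ) :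
    a.det = 1 := (Matrix.mem_specialUnitaryGroup_iff.mp ha).2

lemma su2_inv {a : Mat2} (ha : a ∈ Matrix.specialUnitaryGroup (Fin 2) ℂ) :
    a⁻¹ = star a := Matrix.inv_eq_left_inv (su2_star_mul ha)

lemma toSu2_eq (v : R3) : toSu2 v =
    !![(v 2 : ℂ) * Complex.I, (v 0 : ℂ) * Complex.I - (v 1 : ℂ);
       (v 0 : ℂ) * Complex.I + (v 1 : ℂ), -((v 2 : ℂ) * Complex.I)] := by
  unfold toSu2 E1 E2 E3
  ext i j
  fin_cases i <;> fin_cases j <;>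
    simp [Matrix.add_apply, Matrix.smul_apply] <;> ring

lemma toSu2_add (u v : R3) : toSu2 (u + v) = toSu2 u + toSu2 v := by
  simp only [toSu2_eq]
  ext i j
  fin_cases i <;> fin_cases j <;> simp [Pi.add_apply] <;> push_cast <;> ring

lemma toSu2_smul (r : ℝ) (v : R3) : toSu2 (r • v) = (r : ℂ) • toSu2 v := by
  simp only [toSu2_eq]
  ext i j
  fin_cases i <;> fin_cases j <;> simp [Pi.smul_apply, smul_eq_mul] <;> push_cast <;> ring

lemma toSu2_inj {u v : R3} (h : toSu2 u = toSu2 v) : u = v := by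
  rw [toSu2_eq, toSu2_eq] at h
  funext i
  have h00 := congrFun (congrFun h 0) 0
  have h10 := congrFun (congrFun h 1) 0
  simp [Complex.ext_iff] at h00 h10
  fin_cases i <;> simp [h00, h10.1, h10.2]

lemma toSu2_cross (u v : R3) :
    toSu2 (cross3 u v) = (1 / 2 : ℂ) • (toSu2 u * toSu2 v - toSu2 v * toSu2 u) := by
  simp only [toSu2_eq, cross3]
  ext i j
  fin_cases i <;> fin_cases j <;>
    simp [Matrix.mul_apply, Fin.sum_univ_two, Complex.ext_iff] <;>
    (try constructor) <;> try ring

lemma trace_toSu2_mul (u v : R3) :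
    Matrix.trace (toSu2 u * toSu2 v) = ((-2 * dot3 u v : ℝ) : ℂ) := by
  simp only [toSu2_eq, dot3, Matrix.trace_fin_two]
  simp [Matrix.mul_apply, Fin.sum_univ_two, Complex.ext_iff]
  constructor <;> ring

end Stmt2Aux
namespace Stmt2Aux

/-- Conjugation by `a` using `star` instead of inverse. -/
def AdS (a x : Mat2) : Mat2 := a * x * star a

lemma AdM_eq_AdS {a : Mat2} (h : star a * a = 1) (x : Mat2) : AdM a x = AdS a x := by
  rw [AdM, AdS, Matrix.inv_eq_left_inv h]

lemma AdS_mul (a b x : Mat2) : AdS (a * b) x = AdS a (AdS b x) := by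
  simp [AdS, Matrix.star_mul, Matrix.mul_assoc]

lemma AdS_one (x : Mat2) : AdS 1 x = x := by simp [AdS]

lemma sandwich {a : Mat2} (h : star a * a = 1) (x : Mat2) :
    star a * AdS a x * a = x := by
  have : star a * AdS a x * a = (star a * a) * x * (star a * a) := by
    simp only [AdS, Matrix.mul_assoc]
  rw [this, h, Matrix.one_mul, Matrix.mul_one]

lemma AdS_mul_AdS {a : Mat2} (h : star a * a = 1) (x y : Mat2) :
    AdS a x * AdS a y = AdS a (x * y) := by
  have : AdS a x * AdS a y = a * (x * ((star a * a) * y)) * star a := by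
    simp only [AdS, Matrix.mul_assoc]
  rw [this, h]; simp only [AdS, Matrix.one_mul, Matrix.mul_assoc]

lemma trace_AdS {a : Mat2} (h : star a * a = 1) (x : Mat2) :
    Matrix.trace (AdS a x) = Matrix.trace x := by
  rw [AdS, Matrix.trace_mul_cycle, h, Matrix.one_mul]

lemma AdS_add (a x y : Mat2) : AdS a (x + y) = AdS a x + AdS a y := by
  simp [AdS, Matrix.mul_add, Matrix.add_mul]

lemma AdS_sub (a x y : Mat2) : AdS a (x - y) = AdS a x - AdS a y := by
  simp [AdS, Matrix.mul_sub, Matrix.sub_mul]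

lemma AdS_smul (a : Mat2) (r : ℂ) (x : Mat2) : AdS a (r • x) = r • AdS a x := by
  simp [AdS, Matrix.mul_smul, Matrix.smul_mul]

/-- The basis vectors of su(2). -/
def Evec : Fin 3 → Mat2 := ![E1, E2, E3]

lemma trace_Evec_mul (j k : Fin 3) :
    Matrix.trace (Evec j * Evec k) = if j = k then (-2 : ℂ) else 0 := by
  fin_cases j <;> fin_cases k <;>
    simp [Evec, E1, E2, E3, Matrix.trace_fin_two, Matrix.mul_apply, Fin.sum_univ_two,
      Complex.ext_iff] <;> norm_num [Complex.I_sq]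

lemma E2_eq_bracket : E2 = (1 / 2 : ℂ) • (E3 * E1 - E1 * E3) := by
  ext i j
  fin_cases i <;> fin_cases j <;>
    simp [E1, E2, E3, Matrix.mul_apply, Fin.sum_univ_two, Complex.ext_iff] <;> norm_num

/-- The tangent-normal-position frame of a curve. -/
def frame (γ : ℝ → R3) (s : ℝ) : Fin 3 → R3 :=
  ![(norm3 (deriv γ s))⁻¹ • deriv γ s, unitNormal γ s, γ s]

lemma cross3_smul (u : R3) (r : ℝ) (v : R3) : cross3 u (r • v) = r • cross3 u v := by
  funext i; fin_cases i <;> simp [cross3, Pi.smul_apply, smul_eq_mul] <;> ring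

lemma unitNormal_eq_cross (γ : ℝ → R3) (s : ℝ) :
    unitNormal γ s = cross3 (γ s) ((norm3 (deriv γ s))⁻¹ • deriv γ s) := by
  rw [unitNormal, cross3_smul]

lemma lift_frame {γ : ℝ → R3} {c : ℝ → Mat2} (hc : IsLift γ c) (s : ℝ) (k : Fin 3) :
    AdS (c s) (Evec k) = toSu2 (frame γ s k) := by
  have hstar : star (c s) * c s = 1 := su2_star_mul (hc.mem s)
  have h1 : AdS (c s) E1 = toSu2 (frame γ s 0) := by
    show _ = toSu2 ((norm3 (deriv γ s))⁻¹ • deriv γ s)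
    rw [← AdM_eq_AdS hstar, hc.ad1 s]
  have h3 : AdS (c s) E3 = toSu2 (frame γ s 2) := by
    show _ = toSu2 (γ s)
    rw [← AdM_eq_AdS hstar, hc.ad3 s]
  have e0 : frame γ s 0 = (norm3 (deriv γ s))⁻¹ • deriv γ s := rfl
  have e2 : frame γ s 2 = γ s := rfl
  have h2 : toSu2 (frame γ s 1) = AdS (c s) E2 := by
    show toSu2 (unitNormal γ s) = _
    rw [unitNormal_eq_cross, ← e0, ← e2, toSu2_cross, ← h1, ← h3,
      AdS_mul_AdS hstar, AdS_mul_AdS hstar, ← AdS_sub, ← AdS_smul, ← E2_eq_bracket]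
  fin_cases k
  · exact h1
  · exact h2.symm
  · exact h3

end Stmt2Aux
namespace Stmt2Aux

lemma frame_ortho {γ : ℝ → R3} {c : ℝ → Mat2} (hc : IsLift γ c) (s : ℝ) (j k : Fin 3) :
    dot3 (frame γ s j) (frame γ s k) = if j = k then 1 else 0 := by
  have hstar : star (c s) * c s = 1 := su2_star_mul (hc.mem s)
  have h1 : Matrix.trace (toSu2 (frame γ s j) * toSu2 (frame γ s k))
      = ((-2 * dot3 (frame γ s j) (frame γ s k) : ℝ) : ℂ) := trace_toSu2_mul _ _
  rw [← lift_frame hc s j, ← lift_frame hc s k, AdS_mul_AdS hstar, trace_AdS hstar,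
    trace_Evec_mul] at h1
  by_cases hjk : j = k
  · subst hjk
    simp only [if_pos rfl, if_true, eq_self_iff_true] at h1 ⊢
    have : (-2 * dot3 (frame γ s j) (frame γ s j) : ℝ) = -2 := by
      exact_mod_cast h1.symm
    linarith
  · simp only [if_neg hjk] at h1 ⊢
    have : (-2 * dot3 (frame γ s j) (frame γ s k) : ℝ) = 0 := by
      exact_mod_cast h1.symm
    linarith

/-- The matrix whose rows are the given vectors. -/
def rowMat (u : Fin 3 → R3) : Matrix (Fin 3) (Fin 3) ℝ := Matrix.of fun j i => u j i

lemma rowMat_mul_transpose {u : Fin 3 → R3}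
    (hu : ∀ j k, dot3 (u j) (u k) = if j = k then 1 else 0) :
    rowMat u * (rowMat u)ᵀ = 1 := by
  ext j k
  have := hu j k
  simp only [dot3] at this
  simp [rowMat, Matrix.mul_apply, Fin.sum_univ_three, Matrix.one_apply, this]

lemma frame_key {u : Fin 3 → R3}
    (hu : ∀ j k, dot3 (u j) (u k) = if j = k then 1 else 0) (i j : Fin 3) :
    u 0 i * u 0 j + u 1 i * u 1 j + u 2 i * u 2 j = if i = j then 1 else 0 := by
  have h2 : (rowMat u)ᵀ * rowMat u = 1 :=
    mul_eq_one_comm.mp (rowMat_mul_transpose hu)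
  have := congrFun (congrFun h2 i) j
  simpa [rowMat, Matrix.mul_apply, Fin.sum_univ_three, Matrix.one_apply] using this

lemma frame_expand {u : Fin 3 → R3}
    (hu : ∀ j k, dot3 (u j) (u k) = if j = k then 1 else 0) (v : R3) :
    v = dot3 (u 0) v • u 0 + dot3 (u 1) v • u 1 + dot3 (u 2) v • u 2 := by
  funext i
  have k0 := frame_key hu i 0
  have k1 := frame_key hu i 1
  have k2 := frame_key hu i 2
  simp only [dot3, Pi.add_apply, Pi.smul_apply, smul_eq_mul]
  fin_cases i <;>
    simp only [Fin.zero_eta, Fin.mk_one, show ((⟨2, by omega⟩ : Fin 3)) = 2 from rfl] at k0 k1 k2 ⊢ <;>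
    norm_num [Fin.ext_iff] at k0 k1 k2 ⊢ <;>
    linear_combination (-(v 0)) * k0 - v 1 * k1 - v 2 * k2

end Stmt2Aux
namespace Stmt2Aux

lemma cancel_one {a b x : Mat2} (h : a * b = 1) : a * (b * x) = x := by
  rw [← Matrix.mul_assoc, h, Matrix.one_mul]

/-- The rotation sending frame `u` to frame `w`. -/
def frameRot (u w : Fin 3 → R3) : Matrix (Fin 3) (Fin 3) ℝ := (rowMat w)ᵀ * rowMat u

lemma frameRot_mulVec (u w : Fin 3 → R3) (v : R3) :
    (frameRot u w).mulVec v =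
      dot3 (u 0) v • w 0 + dot3 (u 1) v • w 1 + dot3 (u 2) v • w 2 := by
  funext i
  simp [frameRot, rowMat, Matrix.mulVec, Matrix.mul_apply, dotProduct, dot3,
    Fin.sum_univ_three, Pi.add_apply, Pi.smul_apply, smul_eq_mul]
  ring

lemma frameRot_ortho {u w : Fin 3 → R3}
    (hu : ∀ j k, dot3 (u j) (u k) = if j = k then 1 else 0)
    (hw : ∀ j k, dot3 (w j) (w k) = if j = k then 1 else 0) :
    (frameRot u w)ᵀ * frameRot u w = 1 := by
  have h1 : (frameRot u w)ᵀ = (rowMat u)ᵀ * rowMat w := by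
    rw [frameRot, Matrix.transpose_mul, Matrix.transpose_transpose]
  rw [h1, frameRot, Matrix.mul_assoc, ← Matrix.mul_assoc (rowMat w),
    rowMat_mul_transpose hw, Matrix.one_mul,
    mul_eq_one_comm.mp (rowMat_mul_transpose hu)]

lemma det_rowMat_cross (a b : R3) :
    Matrix.det (rowMat ![b, cross3 a b, a]) = dot3 b b * dot3 a a - dot3 a b ^ 2 := by
  rw [Matrix.det_fin_three]
  simp [rowMat, cross3, dot3]
  ring

lemma det_rowMat_frame {γ : ℝ → R3} {c : ℝ → Mat2} (hc : IsLift γ c) (s : ℝ) :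
    Matrix.det (rowMat (frame γ s)) = 1 := by
  have hfr : frame γ s = ![frame γ s 0, cross3 (frame γ s 2) (frame γ s 0), frame γ s 2] := by
    funext k
    fin_cases k
    · rfl
    · exact unitNormal_eq_cross γ s
    · rfl
  rw [hfr, det_rowMat_cross]
  have o00 := frame_ortho hc s 0 0
  have o22 := frame_ortho hc s 2 2
  have o20 := frame_ortho hc s 2 0
  rw [if_pos rfl] at o00
  rw [if_pos rfl] at o22
  rw [if_neg (by decide)] at o20
  rw [o00, o22, o20]
  norm_num

lemma frameRot_det {γ γb : ℝ → R3} {c d : ℝ → Mat2} (hc : IsLift γ c) (hd : IsLift γb d) :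
    Matrix.det (frameRot (frame γ 0) (frame γb 0)) = 1 := by
  rw [frameRot, Matrix.det_mul, Matrix.det_transpose, det_rowMat_frame hd 0,
    det_rowMat_frame hc 0, mul_one]

lemma backward_curve {γ γb : ℝ → R3} {c d : ℝ → Mat2}
    (hc : IsLift γ c) (hd : IsLift γb d)
    (hrel : ∀ s, d s = (d 0 * star (c 0)) * c s) :
    ∃ α : Matrix (Fin 3) (Fin 3) ℝ,
      αᵀ * α = 1 ∧ α.det = 1 ∧ ∀ s, α.mulVec (γ s) = γb s := by
  have hu := frame_ortho hc 0
  have hw := frame_ortho hd 0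
  refine ⟨frameRot (frame γ 0) (frame γb 0), frameRot_ortho hu hw, frameRot_det hc hd, ?_⟩
  intro s
  set b : Mat2 := d 0 * star (c 0) with hb
  have hb0 : b * c 0 = d 0 := by
    rw [hb, Matrix.mul_assoc, su2_star_mul (hc.mem 0), Matrix.mul_one]
  have key : ∀ k, AdS b (toSu2 (frame γ 0 k)) = toSu2 (frame γb 0 k) := by
    intro k
    rw [← lift_frame hc 0 k, ← AdS_mul, hb0, lift_frame hd 0 k]
  have hexp := frame_expand hu (γ s)
  have hγb : toSu2 (γb s) = AdS b (toSu2 (γ s)) := by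
    have h2 : toSu2 (γb s) = AdS (d s) E3 := (lift_frame hd s 2).symm
    rw [h2, hrel s, AdS_mul]
    rw [show E3 = Evec 2 from rfl, lift_frame hc s 2]
    rfl
  have : toSu2 (γb s) = toSu2 ((frameRot (frame γ 0) (frame γb 0)).mulVec (γ s)) := by
    rw [hγb, frameRot_mulVec]
    conv_lhs => rw [hexp]
    rw [toSu2_add, toSu2_add, toSu2_smul, toSu2_smul, toSu2_smul,
      AdS_add, AdS_add, AdS_smul, AdS_smul, AdS_smul, key 0, key 1, key 2,
      toSu2_add, toSu2_add, toSu2_smul, toSu2_smul, toSu2_smul]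
  exact (toSu2_inj this).symm

end Stmt2Aux
namespace Stmt2Aux

lemma ortho_entries {α : Matrix (Fin 3) (Fin 3) ℝ} (hα : αᵀ * α = 1) (j k : Fin 3) :
    α 0 j * α 0 k + α 1 j * α 1 k + α 2 j * α 2 k = if j = k then 1 else 0 := by
  have := congrFun (congrFun hα j) k
  simpa [Matrix.mul_apply, Fin.sum_univ_three, Matrix.one_apply] using this

lemma dot3_mulVec {α : Matrix (Fin 3) (Fin 3) ℝ} (hα : αᵀ * α = 1) (u v : R3) :
    dot3 (α.mulVec u) (α.mulVec v) = dot3 u v := by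
  have e00 := ortho_entries hα 0 0
  have e01 := ortho_entries hα 0 1
  have e02 := ortho_entries hα 0 2
  have e10 := ortho_entries hα 1 0
  have e11 := ortho_entries hα 1 1
  have e12 := ortho_entries hα 1 2
  have e20 := ortho_entries hα 2 0
  have e21 := ortho_entries hα 2 1
  have e22 := ortho_entries hα 2 2
  norm_num [Fin.ext_iff] at e00 e01 e02 e10 e11 e12 e20 e21 e22
  simp only [dot3, Matrix.mulVec, dotProduct, Fin.sum_univ_three]
  linear_combination u 0 * v 0 * e00 + u 0 * v 1 * e01 + u 0 * v 2 * e02 +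
    u 1 * v 0 * e10 + u 1 * v 1 * e11 + u 1 * v 2 * e12 +
    u 2 * v 0 * e20 + u 2 * v 1 * e21 + u 2 * v 2 * e22

lemma norm3_mulVec {α : Matrix (Fin 3) (Fin 3) ℝ} (hα : αᵀ * α = 1) (v : R3) :
    norm3 (α.mulVec v) = norm3 v := by
  rw [norm3, norm3, dot3_mulVec hα]

lemma cross_poly (A : Matrix (Fin 3) (Fin 3) ℝ) (u v : R3) :
    Aᵀ.mulVec (cross3 (A.mulVec u) (A.mulVec v)) = A.det • cross3 u v := by
  funext i
  fin_cases i <;>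
    simp [Matrix.mulVec, dotProduct, cross3, Matrix.det_fin_three,
      Fin.sum_univ_three, Pi.smul_apply, smul_eq_mul, Matrix.transpose_apply] <;>
    ring

lemma cross3_mulVec {α : Matrix (Fin 3) (Fin 3) ℝ} (hα : αᵀ * α = 1) (hd : α.det = 1)
    (u v : R3) : cross3 (α.mulVec u) (α.mulVec v) = α.mulVec (cross3 u v) := by
  have h1 : α * αᵀ = 1 := mul_eq_one_comm.mp hα
  have h2 := congrArg (fun w => α.mulVec w) (cross_poly α u v)
  simp only [Matrix.mulVec_mulVec, h1, Matrix.one_mulVec, hd, one_smul] at h2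
  exact h2

lemma deriv_mulVec {γ : ℝ → R3} (hγ : ContDiff ℝ (⊤ : ℕ∞) γ) (α : Matrix (Fin 3) (Fin 3) ℝ)
    (s : ℝ) : deriv (fun t => α.mulVec (γ t)) s = α.mulVec (deriv γ s) := by
  have hdiff : HasDerivAt γ (deriv γ s) s :=
    ((hγ.differentiable (by simp)) s).hasDerivAt
  have L : R3 →L[ℝ] R3 := LinearMap.toContinuousLinearMap (Matrix.mulVecLin α)
  have h2 : HasDerivAt (fun t => (LinearMap.toContinuousLinearMap (Matrix.mulVecLin α)) (γ t))
      ((LinearMap.toContinuousLinearMap (Matrix.mulVecLin α)) (deriv γ s)) s :=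
    (LinearMap.toContinuousLinearMap (Matrix.mulVecLin α)).hasFDerivAt.comp_hasDerivAt s hdiff
  have h3 : HasDerivAt (fun t => α.mulVec (γ t)) (α.mulVec (deriv γ s)) s := h2
  exact h3.deriv

end Stmt2Aux
namespace Stmt2Aux

lemma pm_one {a : Mat2} (hdet : a.det = 1)
    (h1 : a * E1 = E1 * a) (h3 : a * E3 = E3 * a) : a = 1 ∨ a = -1 := by
  have e01 := congrFun (congrFun h3 0) 1
  have e10 := congrFun (congrFun h3 1) 0
  have e00 := congrFun (congrFun h1 0) 1
  simp [E1, E3, Matrix.mul_apply, Fin.sum_univ_two] at e01 e10 e00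
  -- e01 : a 0 1 * (-I) = I * a 0 1, e10 : a 1 0 * I = -I * a 1 0, e00 : a 0 0 * I = I * a 1 1
  have hq : a 0 1 = 0 := by
    linear_combination (Complex.I / 2) * e01 + a 0 1 * Complex.I_sq
  have hr : a 1 0 = 0 := by
    linear_combination (-Complex.I / 2) * e10 + a 1 0 * Complex.I_sq
  have hpt : a 0 0 = a 1 1 := by
    linear_combination (-Complex.I) * e00 + (a 0 0 - a 1 1) * Complex.I_sq
  rw [Matrix.det_fin_two, hq, hr, ← hpt] at hdet
  have hsq : (a 0 0 - 1) * (a 0 0 + 1) = 0 := by linear_combination hdet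
  rcases mul_eq_zero.mp hsq with hp | hp
  · left
    ext i j
    fin_cases i <;> fin_cases j <;>
      simp [hq, hr, ← hpt, Matrix.one_apply] <;> linear_combination hp
  · right
    ext i j
    fin_cases i <;> fin_cases j <;>
      simp [hq, hr, ← hpt, Matrix.one_apply] <;> linear_combination hp

lemma star_mul_self_mul {a b : Mat2} (ha : star a * a = 1) (hb : star b * b = 1) :
    star (a * b) * (a * b) = 1 := by
  rw [Matrix.star_mul, Matrix.mul_assoc, ← Matrix.mul_assoc (star a), ha, Matrix.one_mul, hb]

lemma AdS_star (a x : Mat2) : AdS (star a) x = star a * x * a := by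
  rw [AdS, star_star]

lemma AdS_star_AdS {a : Mat2} (h : star a * a = 1) (x : Mat2) :
    AdS (star a) (AdS a x) = x := by
  rw [AdS_star]; exact sandwich h x

end Stmt2Aux
namespace Stmt2Aux

lemma forward_curve {γ γb : ℝ → R3} {c d : ℝ → Mat2}
    (hsm : ContDiff ℝ (⊤ : ℕ∞) γ) (hc : IsLift γ c) (hd : IsLift γb d)
    {α : Matrix (Fin 3) (Fin 3) ℝ} (hαo : αᵀ * α = 1) (hαd : α.det = 1)
    (hα : ∀ s, α.mulVec (γ s) = γb s) :
    ∀ s, d s = (d 0 * star (c 0)) * c s := by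
  have hγb : γb = fun t => α.mulVec (γ t) := by funext t; exact (hα t).symm
  have hderiv : ∀ s, deriv γb s = α.mulVec (deriv γ s) := by
    intro s; rw [hγb]; exact deriv_mulVec hsm α s
  have hframe : ∀ s k, α.mulVec (frame γ s k) = frame γb s k := by
    intro s k
    fin_cases k
    · show α.mulVec ((norm3 (deriv γ s))⁻¹ • deriv γ s)
        = (norm3 (deriv γb s))⁻¹ • deriv γb s
      rw [hderiv s, norm3_mulVec hαo, Matrix.mulVec_smul]
    · show α.mulVec (unitNormal γ s) = unitNormal γb s
      simp only [unitNormal]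
      rw [hderiv s, norm3_mulVec hαo, ← hα s, cross3_mulVec hαo hαd, Matrix.mulVec_smul]
    · exact hα s
  set b : Mat2 := d 0 * star (c 0) with hbdef
  have hb0 : b * c 0 = d 0 := by
    rw [hbdef, Matrix.mul_assoc, su2_star_mul (hc.mem 0), Matrix.mul_one]
  have hbu : star b * b = 1 := by
    rw [hbdef, Matrix.star_mul, star_star, Matrix.mul_assoc, ← Matrix.mul_assoc (star (d 0)),
      su2_star_mul (hd.mem 0), Matrix.one_mul, su2_mul_star (hc.mem 0)]
  have hbu' : b * star b = 1 := mul_eq_one_comm.mp hbu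
  have key0 : ∀ k, AdS b (toSu2 (frame γ 0 k)) = toSu2 (frame γb 0 k) := by
    intro k; rw [← lift_frame hc 0 k, ← AdS_mul, hb0, lift_frame hd 0 k]
  have hu := frame_ortho hc 0
  have main : ∀ s k, AdS b (toSu2 (frame γ s k)) = toSu2 (frame γb s k) := by
    intro s k
    have hexp := frame_expand hu (frame γ s k)
    have hexp2 : frame γb s k = dot3 (frame γ 0 0) (frame γ s k) • frame γb 0 0 +
        dot3 (frame γ 0 1) (frame γ s k) • frame γb 0 1 +
        dot3 (frame γ 0 2) (frame γ s k) • frame γb 0 2 := by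
      rw [← hframe s k, ← hframe 0 0, ← hframe 0 1, ← hframe 0 2]
      conv_lhs => rw [hexp]
      rw [Matrix.mulVec_add, Matrix.mulVec_add, Matrix.mulVec_smul, Matrix.mulVec_smul,
        Matrix.mulVec_smul]
    conv_lhs => rw [hexp]
    rw [toSu2_add, toSu2_add, toSu2_smul, toSu2_smul, toSu2_smul, AdS_add, AdS_add,
      AdS_smul, AdS_smul, AdS_smul, key0 0, key0 1, key0 2, hexp2,
      toSu2_add, toSu2_add, toSu2_smul, toSu2_smul, toSu2_smul]
  set ε : ℝ → Mat2 := fun s => star (c s) * (star b * d s) with hε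
  have hεfix : ∀ s k, AdS (ε s) (Evec k) = Evec k := by
    intro s k
    show AdS (star (c s) * (star b * d s)) (Evec k) = Evec k
    rw [AdS_mul, AdS_mul, lift_frame hd s k, ← main s k, AdS_star_AdS hbu,
      ← lift_frame hc s k, AdS_star_AdS (su2_star_mul (hc.mem s))]
  have hεu : ∀ s, star (ε s) * ε s = 1 := by
    intro s
    apply star_mul_self_mul
    · rw [star_star]; exact su2_mul_star (hc.mem s)
    · apply star_mul_self_mul
      · rw [star_star]; exact hbu'
      · exact su2_star_mul (hd.mem s)
  have hdetb : b.det = 1 := by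
    rw [hbdef, Matrix.det_mul, su2_det (hd.mem 0), Matrix.star_eq_conjTranspose,
      Matrix.det_conjTranspose, su2_det (hc.mem 0)]
    simp
  have hεdet : ∀ s, (ε s).det = 1 := by
    intro s
    show (star (c s) * (star b * d s)).det = 1
    rw [Matrix.det_mul, Matrix.det_mul, Matrix.star_eq_conjTranspose,
      Matrix.det_conjTranspose, su2_det (hc.mem s),
      Matrix.star_eq_conjTranspose, Matrix.det_conjTranspose, hdetb, su2_det (hd.mem s)]
    simp
  have hpm : ∀ s, ε s = 1 ∨ ε s = -1 := by
    intro s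
    have hcomm : ∀ k, ε s * Evec k = Evec k * ε s := by
      intro k
      have h3 := congrArg (fun m => m * ε s) (hεfix s k)
      simp only [AdS] at h3
      rw [Matrix.mul_assoc (ε s * Evec k), hεu s, Matrix.mul_one] at h3
      exact h3
    exact pm_one (hεdet s) (hcomm 0) (hcomm 2)
  have hε0 : ε 0 = 1 := by
    show star (c 0) * (star (d 0 * star (c 0)) * d 0) = 1
    rw [Matrix.star_mul, star_star, Matrix.mul_assoc (c 0), su2_star_mul (hd.mem 0),
      Matrix.mul_one, su2_star_mul (hc.mem 0)]
  have hcont : Continuous fun s => (ε s 0 0).re := by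
    have hfor : ∀ s, ε s 0 0 =
        (starRingEnd ℂ) (c s 0 0) * ((star b) 0 0 * d s 0 0 + (star b) 0 1 * d s 1 0) +
        (starRingEnd ℂ) (c s 1 0) * ((star b) 1 0 * d s 0 0 + (star b) 1 1 * d s 1 0) := by
      intro s
      show (star (c s) * (star b * d s)) 0 0 = _
      simp [Matrix.mul_apply, Fin.sum_univ_two, Matrix.star_eq_conjTranspose,
        Matrix.conjTranspose_apply]
    have h1 : Continuous fun s => c s 0 0 := (hc.smooth 0 0).continuous
    have h2 : Continuous fun s => c s 1 0 := (hc.smooth 1 0).continuous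
    have h3 : Continuous fun s => d s 0 0 := (hd.smooth 0 0).continuous
    have h4 : Continuous fun s => d s 1 0 := (hd.smooth 1 0).continuous
    simp only [hfor]
    fun_prop
  have hone : ∀ s, ε s = 1 := by
    intro t
    by_contra ht
    have htneg : ε t = -1 := (hpm t).resolve_left ht
    have hg0 : (ε 0 0 0).re = 1 := by rw [hε0]; simp [Matrix.one_apply]
    have hgt : (ε t 0 0).re = -1 := by rw [htneg]; simp [Matrix.one_apply]
    have hsub := intermediate_value_uIcc (a := (0:ℝ)) (b := t)
      (f := fun s => (ε s 0 0).re) hcont.continuousOn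
    have h0mem : (0:ℝ) ∈ Set.uIcc ((ε 0 0 0).re) ((ε t 0 0).re) := by
      rw [hg0, hgt, Set.mem_uIcc]
      right
      constructor <;> norm_num
    obtain ⟨u, _, hgu⟩ := hsub h0mem
    rcases hpm u with hu1 | hu1 <;>
      simp [hu1, Matrix.one_apply, Matrix.neg_apply] at hgu
  intro s
  have h1 : (b * c s) * ε s = d s := by
    show (b * c s) * (star (c s) * (star b * d s)) = d s
    rw [Matrix.mul_assoc, cancel_one (su2_mul_star (hc.mem s)), cancel_one hbu']
  rw [hone s, Matrix.mul_one] at h1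
  exact h1.symm

end Stmt2Aux
open Stmt2Aux in
theorem stmt2 (γ1 γ2 γb1 γb2 : ℝ → R3) (c1 c2 d1 d2 : ℝ → Mat2)
    (h : IsAdmissiblePair γ1 γ2) (hb : IsAdmissiblePair γb1 γb2)
    (hc1 : IsLift γ1 c1) (hc2 : IsLift γ2 c2)
    (hd1 : IsLift γb1 d1) (hd2 : IsLift γb2 d2) :
    (∃ α1 α2 : Matrix (Fin 3) (Fin 3) ℝ,
      α1ᵀ * α1 = 1 ∧ α1.det = 1 ∧ α2ᵀ * α2 = 1 ∧ α2.det = 1 ∧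
      (∀ s, α1.mulVec (γ1 s) = γb1 s) ∧ ∀ s, α2.mulVec (γ2 s) = γb2 s) ↔
    ∀ s1 s2 : ℝ, fmap c1 c2 s1 s2 = fmap d1 d2 s1 s2 := by
  constructor
  · rintro ⟨α1, α2, h1o, h1d, h2o, h2d, hg1, hg2⟩
    have hr1 : ∀ s, d1 s = (d1 0 * star (c1 0)) * c1 s :=
      forward_curve h.reg1.smooth hc1 hd1 h1o h1d hg1
    have hr2 : ∀ s, d2 s = (d2 0 * star (c2 0)) * c2 s :=
      forward_curve h.reg2.smooth hc2 hd2 h2o h2d hg2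
    intro s1 s2
    have hA : star (d1 0) * d1 s1 = star (c1 0) * c1 s1 := by
      rw [hr1 s1]
      simp only [← Matrix.mul_assoc]
      rw [su2_star_mul (hd1.mem 0), Matrix.one_mul]
    have hB : star (d2 s2) * d2 0 = star (c2 s2) * c2 0 := by
      rw [hr2 s2, Matrix.star_mul, Matrix.star_mul, star_star]
      simp only [← Matrix.mul_assoc]
      rw [Matrix.mul_assoc (star (c2 s2) * c2 0) (star (d2 0)) (d2 0),
        su2_star_mul (hd2.mem 0), Matrix.mul_one]
    rw [fmap, fmap, su2_inv (hd1.mem 0), su2_inv (hd2.mem s2),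
      su2_inv (hc1.mem 0), su2_inv (hc2.mem s2),
      Matrix.mul_assoc (star (c1 0) * c1 s1) (star (c2 s2)) (c2 0),
      Matrix.mul_assoc (star (d1 0) * d1 s1) (star (d2 s2)) (d2 0), hA, hB]
  · intro hf
    have h10 : ∀ s, d1 s = (d1 0 * star (c1 0)) * c1 s := by
      intro s
      have hs := hf s 0
      rw [fmap, fmap, su2_inv (hc2.mem 0), su2_inv (hd2.mem 0),
        su2_inv (hc1.mem 0), su2_inv (hd1.mem 0),
        Matrix.mul_assoc _ (star (c2 0)) (c2 0), su2_star_mul (hc2.mem 0), Matrix.mul_one,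
        Matrix.mul_assoc _ (star (d2 0)) (d2 0), su2_star_mul (hd2.mem 0),
        Matrix.mul_one] at hs
      have h2 := congrArg (fun m => d1 0 * m) hs
      simp only [← Matrix.mul_assoc] at h2 ⊢
      rw [su2_mul_star (hd1.mem 0), Matrix.one_mul] at h2
      exact h2.symm
    have h20 : ∀ s, d2 s = (d2 0 * star (c2 0)) * c2 s := by
      intro s
      have hs := hf 0 s
      rw [fmap, fmap, su2_inv (hc1.mem 0), su2_inv (hd1.mem 0),
        su2_inv (hc2.mem s), su2_inv (hd2.mem s),
        su2_star_mul (hc1.mem 0), su2_star_mul (hd1.mem 0),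
        Matrix.one_mul, Matrix.one_mul] at hs
      have h2 := congrArg (fun m => d2 s * m * (star (c2 0) * c2 s)) hs
      simp only [← Matrix.mul_assoc] at h2 ⊢
      rw [Matrix.mul_assoc (d2 s * star (c2 s)) (c2 0) (star (c2 0)),
        su2_mul_star (hc2.mem 0), Matrix.mul_one,
        Matrix.mul_assoc (d2 s) (star (c2 s)) (c2 s), su2_star_mul (hc2.mem s),
        Matrix.mul_one, su2_mul_star (hd2.mem s), Matrix.one_mul] at h2
      exact h2
    obtain ⟨α1, hα1o, hα1d, hα1⟩ := backward_curve hc1 hd1 h10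
    obtain ⟨α2, hα2o, hα2d, hα2⟩ := backward_curve hc2 hd2 h20
    exact ⟨α1, α2, hα1o, hα1d, hα2o, hα2d, hα1, hα2⟩
end
end

section
/- Let (γ₁,γ₂) be an admissible pair of regular curves in S² admitting lifts, and define γ̄₁(s) := −γ₂(s) and γ̄₂(s) := −γ₁(s). Then (γ̄₁,γ̄₂) is an admissible pair whose geodesic curvatures satisfy κ̄₁(s) = −κ₂(s) and κ̄₂(s) = −κ₁(s), and there exists g ∈ SU(2) such that f_{γ̄₁,γ̄₂}(s₁,s₂) = g⁻¹ (f_{γ₁,γ₂}(s₂,s₁))⁻¹ g for all (s₁,s₂) ∈ ℝ². -/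
noncomputable section

open Matrix

/-! ### Auxiliary lemmas for Statement 3 -/

lemma deriv_neg_fun (γ : ℝ → R3) : deriv (fun s => -γ s) = fun s => -deriv γ s :=
  funext fun _ => deriv.neg

lemma dot3_neg_neg (a b : R3) : dot3 (-a) (-b) = dot3 a b := by
  simp [dot3]

lemma norm3_neg (a : R3) : norm3 (-a) = norm3 a := by
  simp [norm3, dot3]

lemma det3_neg (a b c : R3) : det3 (-a) (-b) (-c) = -det3 a b c := by
  simp [det3, cross3, dot3]; ring

lemma toSu2_neg (v : R3) : toSu2 (-v) = -toSu2 v := by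
  simp [toSu2]; module

lemma E2_inv : E2⁻¹ = -E2 := by
  apply Matrix.inv_eq_right_inv
  ext i j; fin_cases i <;> fin_cases j <;> simp [E2, Matrix.mul_apply, Fin.sum_univ_two]

lemma E2_conj_E3 : E2 * E3 * E2⁻¹ = -E3 := by
  rw [E2_inv]
  ext i j; fin_cases i <;> fin_cases j <;> simp [E2, E3, Matrix.mul_apply, Fin.sum_univ_two]

lemma E2_conj_E1 : E2 * E1 * E2⁻¹ = -E1 := by
  rw [E2_inv]
  ext i j; fin_cases i <;> fin_cases j <;> simp [E1, E2, Matrix.mul_apply, Fin.sum_univ_two]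

lemma E2_mem : E2 ∈ Matrix.specialUnitaryGroup (Fin 2) ℂ := by
  rw [Matrix.mem_specialUnitaryGroup_iff]
  constructor
  · rw [Matrix.mem_unitaryGroup_iff]
    ext i j; fin_cases i <;> fin_cases j <;>
      simp [E2, Matrix.mul_apply, Fin.sum_univ_two, Matrix.conjTranspose_apply]
  · simp [E2, Matrix.det_fin_two_of]

lemma E2_det_isUnit : IsUnit (Matrix.det E2) := by
  simp [E2, Matrix.det_fin_two_of]

lemma su2_det_isUnit {A : Mat2} (h : A ∈ Matrix.specialUnitaryGroup (Fin 2) ℂ) :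
    IsUnit (Matrix.det A) := by
  rw [Matrix.mem_specialUnitaryGroup_iff] at h
  rw [h.2]; exact isUnit_one

lemma kappa_neg (γ : ℝ → R3) (s : ℝ) : kappa (fun t => -γ t) s = -kappa γ s := by
  have h1 : deriv (fun t => -γ t) = fun t => -deriv γ t := deriv_neg_fun γ
  have h2 : deriv (fun t => -deriv γ t) = fun t => -deriv (deriv γ) t :=
    deriv_neg_fun (deriv γ)
  simp only [kappa, h1, h2, norm3_neg, det3_neg, neg_div]

lemma isRegularCurve_neg {γ : ℝ → R3} (h : IsRegularCurve γ) :
    IsRegularCurve (fun s => -γ s) where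
  smooth := h.smooth.neg
  sphere s := by simp only [dot3_neg_neg]; exact h.sphere s
  reg s := by
    rw [deriv_neg_fun]
    simpa using h.reg s

lemma adm_conj (a x : Mat2) : AdM (a * E2) x = a * (E2 * x * E2⁻¹) * a⁻¹ := by
  simp only [AdM, Matrix.mul_inv_rev, Matrix.mul_assoc]

lemma isLift_neg {γ : ℝ → R3} {c : ℝ → Mat2} (hc : IsLift γ c) :
    IsLift (fun s => -γ s) (fun s => c s * E2) where
  mem s := mul_mem (hc.mem s) E2_mem
  smooth i j := by
    simp only [Matrix.mul_apply, Fin.sum_univ_two]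
    exact ((hc.smooth i 0).mul contDiff_const).add ((hc.smooth i 1).mul contDiff_const)
  ad3 s := by
    have h3 := hc.ad3 s
    rw [AdM] at h3
    rw [adm_conj, E2_conj_E3]
    simp only [toSu2_neg, ← h3, Matrix.mul_neg, Matrix.neg_mul]
  ad1 s := by
    have h1 := hc.ad1 s
    rw [AdM] at h1
    rw [adm_conj, E2_conj_E1]
    simp only [deriv_neg_fun, norm3_neg, smul_neg, toSu2_neg, ← h1,
      Matrix.mul_neg, Matrix.neg_mul]

theorem stmt3 (γ1 γ2 : ℝ → R3) (c1 c2 : ℝ → Mat2)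
    (h : IsAdmissiblePair γ1 γ2) (hc1 : IsLift γ1 c1) (hc2 : IsLift γ2 c2) :
    IsAdmissiblePair (fun s => -γ2 s) (fun s => -γ1 s) ∧
    (∀ s, kappa (fun s => -γ2 s) s = -kappa γ2 s) ∧
    (∀ s, kappa (fun s => -γ1 s) s = -kappa γ1 s) ∧
    ∃ d1 d2 : ℝ → Mat2, IsLift (fun s => -γ2 s) d1 ∧ IsLift (fun s => -γ1 s) d2 ∧
      ∃ g ∈ Matrix.specialUnitaryGroup (Fin 2) ℂ,
        ∀ s1 s2 : ℝ, fmap d1 d2 s1 s2 = g⁻¹ * (fmap c1 c2 s2 s1)⁻¹ * g := by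
  refine ⟨?_, fun s => kappa_neg γ2 s, fun s => kappa_neg γ1 s, ?_⟩
  · exact
      { reg1 := isRegularCurve_neg h.reg2
        reg2 := isRegularCurve_neg h.reg1
        param1 := fun s => by
          simpa only [deriv_neg_fun, norm3_neg, kappa_neg, neg_sq] using h.param2 s
        param2 := fun s => by
          simpa only [deriv_neg_fun, norm3_neg, kappa_neg, neg_sq] using h.param1 s
        curv := fun s1 s2 => by
          simp only [kappa_neg, neg_lt_neg_iff]
          exact h.curv s2 s1 }
  · refine ⟨fun s => c2 s * E2, fun s => c1 s * E2, isLift_neg hc2, isLift_neg hc1,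
      E2, E2_mem, fun s1 s2 => ?_⟩
    have h10 := su2_det_isUnit (hc1.mem 0)
    have h2s := su2_det_isUnit (hc2.mem s1)
    simp only [fmap, Matrix.mul_inv_rev, Matrix.mul_assoc,
      Matrix.nonsing_inv_nonsing_inv _ h10, Matrix.nonsing_inv_nonsing_inv _ h2s,
      Matrix.mul_nonsing_inv_cancel_left _ _ E2_det_isUnit]
end
end

section
/- Let (γ₁,γ₂) be an admissible pair of regular curves in S² with lifts c₁, c₂, and suppose each γᵢ is closed of period lᵢ > 0. Then for each i ∈ {1,2}, either cᵢ(s+lᵢ) = cᵢ(s) for all s or cᵢ(s+lᵢ) = −cᵢ(s) for all s; in particular cᵢ(s+2lᵢ) = cᵢ(s) for all s, and the associated map is doubly periodic: f_{γ₁,γ₂}(s₁+2l₁, s₂) = f_{γ₁,γ₂}(s₁,s₂) = f_{γ₁,γ₂}(s₁, s₂+2l₂) for all (s₁,s₂) ∈ ℝ². -/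
noncomputable section

open Matrix

/-- A matrix in su(2)'s commutant trick: an SL(2,C) matrix commuting with both E1 and E3
is plus or minus the identity. -/
lemma comm_pm (a : Mat2) (hd : a.det = 1) (h3 : a * E3 = E3 * a) (h1 : a * E1 = E1 * a) :
    a = 1 ∨ a = -1 := by
  have e01 := congrFun (congrFun h3 0) 1
  have e10 := congrFun (congrFun h3 1) 0
  simp [E3, Matrix.mul_apply, Fin.sum_univ_two] at e01 e10
  have h01 : a 0 1 = 0 := by
    have : (2 : ℂ) * Complex.I * a 0 1 = 0 := by ring_nf; linear_combination (-1:ℂ) * e01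
    simpa [Complex.I_ne_zero] using this
  have h10 : a 1 0 = 0 := by
    have : (2 : ℂ) * Complex.I * a 1 0 = 0 := by ring_nf; linear_combination e10
    simpa [Complex.I_ne_zero] using this
  have e1 := congrFun (congrFun h1 0) 1
  simp [E1, Matrix.mul_apply, Fin.sum_univ_two] at e1
  have hdiag : a 0 0 = a 1 1 := by
    have hz : Complex.I * (a 0 0 - a 1 1) = 0 := by linear_combination e1
    rcases mul_eq_zero.mp hz with hh | hh
    · exact absurd hh Complex.I_ne_zero
    · exact sub_eq_zero.mp hh
  rw [Matrix.det_fin_two, h01, hdiag] at hd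
  have hsq : (a 1 1 - 1) * (a 1 1 + 1) = 0 := by ring_nf; linear_combination hd
  rcases mul_eq_zero.mp hsq with hh | hh
  · left
    have h11 : a 1 1 = 1 := by linear_combination hh
    ext i j; fin_cases i <;> fin_cases j <;>
      simp [h01, h10, hdiag, h11, Matrix.one_apply]
  · right
    have h11 : a 1 1 = -1 := by linear_combination hh
    ext i j; fin_cases i <;> fin_cases j <;>
      simp [h01, h10, hdiag, h11, Matrix.one_apply]

/-- A lift of a closed curve of period `l` is periodic or anti-periodic with period `l`. -/
lemma lift_period (γ : ℝ → R3) (l : ℝ) (c : ℝ → Mat2)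
    (hp : ∀ s, γ (s + l) = γ s) (hc : IsLift γ c) :
    (∀ s, c (s + l) = c s) ∨ ∀ s, c (s + l) = -(c s) := by
  have hdet : ∀ s, (c s).det = 1 := fun s =>
    (Matrix.mem_specialUnitaryGroup_iff.mp (hc.mem s)).2
  have hU : ∀ s, IsUnit (c s).det := fun s => by rw [hdet]; exact isUnit_one
  have hderiv : ∀ s, deriv γ (s + l) = deriv γ s := by
    intro s
    have hfe : (fun x => γ (x + l)) = γ := funext hp
    calc deriv γ (s + l) = deriv (fun x => γ (x + l)) s := (deriv_comp_add_const γ l s).symm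
      _ = deriv γ s := by rw [hfe]
  have key : ∀ s, (c s)⁻¹ * c (s + l) = 1 ∨ (c s)⁻¹ * c (s + l) = -1 := by
    intro s
    haveI : Invertible (c s) := (c s).invertibleOfIsUnitDet (hU s)
    haveI : Invertible (c (s + l)) := (c (s + l)).invertibleOfIsUnitDet (hU (s + l))
    apply comm_pm
    · rw [Matrix.det_mul, Matrix.det_nonsing_inv, hdet, hdet, Ring.inverse_one, one_mul]
    · have k3 : c (s + l) * E3 * (c (s + l))⁻¹ = c s * E3 * (c s)⁻¹ := by
        have ha := hc.ad3 (s + l)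
        have hb := hc.ad3 s
        rw [hp s] at ha
        unfold AdM at ha hb
        rw [ha, hb]
      calc (c s)⁻¹ * c (s + l) * E3
          = (c s)⁻¹ * (c (s + l) * E3 * (c (s + l))⁻¹ * c (s + l)) := by
            rw [Matrix.inv_mul_cancel_right_of_invertible, Matrix.mul_assoc]
        _ = (c s)⁻¹ * (c s * E3 * (c s)⁻¹ * c (s + l)) := by rw [k3]
        _ = E3 * ((c s)⁻¹ * c (s + l)) := by
            simp only [Matrix.mul_assoc, Matrix.inv_mul_cancel_left_of_invertible]
    · have k1 : c (s + l) * E1 * (c (s + l))⁻¹ = c s * E1 * (c s)⁻¹ := by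
        have ha := hc.ad1 (s + l)
        have hb := hc.ad1 s
        rw [hderiv s] at ha
        unfold AdM at ha hb
        rw [ha, hb]
      calc (c s)⁻¹ * c (s + l) * E1
          = (c s)⁻¹ * (c (s + l) * E1 * (c (s + l))⁻¹ * c (s + l)) := by
            rw [Matrix.inv_mul_cancel_right_of_invertible, Matrix.mul_assoc]
        _ = (c s)⁻¹ * (c s * E1 * (c s)⁻¹ * c (s + l)) := by rw [k1]
        _ = E1 * ((c s)⁻¹ * c (s + l)) := by
            simp only [Matrix.mul_assoc, Matrix.inv_mul_cancel_left_of_invertible]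
  -- continuity argument: the sign is constant
  have hinv : ∀ s, (c s)⁻¹ = (c s).adjugate := by
    intro s; rw [Matrix.inv_def, hdet, Ring.inverse_one, one_smul]
  have hentry : ∀ s, ((c s)⁻¹ * c (s + l)) 0 0
      = c s 1 1 * c (s + l) 0 0 - c s 0 1 * c (s + l) 1 0 := by
    intro s
    rw [hinv, Matrix.adjugate_fin_two, Matrix.mul_apply, Fin.sum_univ_two]
    simp
    ring
  set φ : ℝ → ℝ := fun s => (c s 1 1 * c (s + l) 0 0 - c s 0 1 * c (s + l) 1 0).re with hφdef
  have hφcont : Continuous φ := by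
    have hcij : ∀ i j, Continuous fun s => c s i j := fun i j => (hc.smooth i j).continuous
    have hcij' : ∀ i j, Continuous fun s => c (s + l) i j := fun i j =>
      (hcij i j).comp (continuous_add_right l)
    exact Complex.continuous_re.comp
      (((hcij 1 1).mul (hcij' 0 0)).sub ((hcij 0 1).mul (hcij' 1 0)))
  have hval : ∀ s, φ s = 1 ∨ φ s = -1 := by
    intro s
    rcases key s with hk | hk
    · left
      have := hentry s
      rw [hk] at this
      simp only [hφdef]
      rw [← this]
      simp [Matrix.one_apply]
    · right
      have := hentry s
      rw [hk] at this
      simp only [hφdef]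
      rw [← this]
      simp [Matrix.one_apply]
  have hsign : ∀ s, φ s = φ 0 := by
    intro s
    by_contra hne
    have h0 : (0 : ℝ) ∈ Set.uIcc (φ 0) (φ s) := by
      rcases hval 0 with h0v | h0v <;> rcases hval s with hsv | hsv <;>
        simp_all [Set.mem_uIcc]
    obtain ⟨t, _, ht⟩ := intermediate_value_uIcc (hφcont.continuousOn (s := Set.uIcc 0 s)) h0
    rcases hval t with hh | hh <;> rw [ht] at hh <;> norm_num at hh
  have hmul : ∀ s, c (s + l) = c s * ((c s)⁻¹ * c (s + l)) := by
    intro s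
    haveI : Invertible (c s) := (c s).invertibleOfIsUnitDet (hU s)
    rw [Matrix.mul_inv_cancel_left_of_invertible]
  rcases key 0 with hk0 | hk0
  · left
    intro s
    rcases key s with hk | hk
    · rw [hmul s, hk, Matrix.mul_one]
    · exfalso
      have e1 : φ 0 = 1 := by
        have := hentry 0; rw [hk0] at this
        simp only [hφdef]; rw [← this]; simp [Matrix.one_apply]
      have e2 : φ s = -1 := by
        have := hentry s; rw [hk] at this
        simp only [hφdef]; rw [← this]; simp [Matrix.one_apply]
      rw [hsign s, e1] at e2; norm_num at e2
  · right
    intro s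
    rcases key s with hk | hk
    · exfalso
      have e1 : φ 0 = -1 := by
        have := hentry 0; rw [hk0] at this
        simp only [hφdef]; rw [← this]; simp [Matrix.one_apply]
      have e2 : φ s = 1 := by
        have := hentry s; rw [hk] at this
        simp only [hφdef]; rw [← this]; simp [Matrix.one_apply]
      rw [hsign s, e1] at e2; norm_num at e2
    · rw [hmul s, hk, Matrix.mul_neg, Matrix.mul_one]

theorem stmt4 (γ1 γ2 : ℝ → R3) (l1 l2 : ℝ) (c1 c2 : ℝ → Mat2)
    (h : IsAdmissiblePair γ1 γ2) (h1 : HasPeriod γ1 l1) (h2 : HasPeriod γ2 l2)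
    (hc1 : IsLift γ1 c1) (hc2 : IsLift γ2 c2) :
    ((∀ s, c1 (s + l1) = c1 s) ∨ ∀ s, c1 (s + l1) = -c1 s) ∧
    ((∀ s, c2 (s + l2) = c2 s) ∨ ∀ s, c2 (s + l2) = -c2 s) ∧
    (∀ s, c1 (s + 2 * l1) = c1 s) ∧ (∀ s, c2 (s + 2 * l2) = c2 s) ∧
    ∀ s1 s2 : ℝ, fmap c1 c2 (s1 + 2 * l1) s2 = fmap c1 c2 s1 s2 ∧
      fmap c1 c2 s1 (s2 + 2 * l2) = fmap c1 c2 s1 s2 := by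
  have hA := lift_period γ1 l1 c1 h1.2 hc1
  have hB := lift_period γ2 l2 c2 h2.2 hc2
  have h2A : ∀ s, c1 (s + 2 * l1) = c1 s := by
    intro s
    have hrw : s + 2 * l1 = s + l1 + l1 := by ring
    rcases hA with hA | hA
    · rw [hrw, hA, hA]
    · rw [hrw, hA, hA, neg_neg]
  have h2B : ∀ s, c2 (s + 2 * l2) = c2 s := by
    intro s
    have hrw : s + 2 * l2 = s + l2 + l2 := by ring
    rcases hB with hB | hB
    · rw [hrw, hB, hB]
    · rw [hrw, hB, hB, neg_neg]
  refine ⟨hA, hB, h2A, h2B, fun s1 s2 => ⟨?_, ?_⟩⟩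
  · unfold fmap; rw [h2A s1]
  · unfold fmap; rw [h2B s2]
end
end

section
/- Let γ : ℝ → S² be a regular curve with unit normal n and geodesic curvature κ satisfying |γ'(s)|²(1+κ(s)²) = 4 for all s, and let θ ∈ ℝ satisfy |cos θ − κ(s) sin θ| > 0 for all s ∈ ℝ. Then the parallel curve γ^θ(s) := (cos θ)γ(s) + (sin θ)n(s) is a regular curve in S², its geodesic curvature is κ^θ(s) = (sin θ + κ(s) cos θ)/|cos θ − κ(s) sin θ|, and |(γ^θ)'(s)|²(1 + κ^θ(s)²) = 4 for all s. -/
noncomputable section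

open Matrix

lemma S14.dot3_comm (a b : R3) : dot3 a b = dot3 b a := by unfold dot3; ring

lemma S14.lagrange (a b c d : R3) :
    dot3 (cross3 a b) (cross3 c d) = dot3 a c * dot3 b d - dot3 a d * dot3 b c := by
  simp [dot3, cross3]; ring

lemma S14.dot3_smul_smul (t u : ℝ) (a b : R3) :
    dot3 (t • a) (u • b) = t * u * dot3 a b := by
  simp [dot3]; ring

lemma S14.dot3_self_cross (a b : R3) : dot3 a (cross3 a b) = 0 := by
  simp [dot3, cross3]; ring

lemma S14.key_vec (a b c : R3) (hab : dot3 a b = 0) :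
    dot3 b b • cross3 a c - dot3 b c • cross3 a b = (-(dot3 a (cross3 b c))) • b := by
  funext i
  unfold dot3 at hab
  fin_cases i
  · simp [dot3, cross3]; linear_combination (b 1 * c 2 - b 2 * c 1) * hab
  · simp [dot3, cross3]; linear_combination (b 2 * c 0 - b 0 * c 2) * hab
  · simp [dot3, cross3]; linear_combination (b 0 * c 1 - b 1 * c 0) * hab

lemma S14.dot3_pos {a : R3} (ha : a ≠ 0) : 0 < dot3 a a := by
  rcases Function.ne_iff.1 ha with ⟨i, hi⟩
  simp only [Pi.zero_apply] at hi
  have h0 := sq_nonneg (a 0); have h1 := sq_nonneg (a 1); have h2 := sq_nonneg (a 2)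
  fin_cases i
  · unfold dot3; nlinarith [mul_self_pos.2 (show a 0 ≠ 0 from hi)]
  · unfold dot3; nlinarith [mul_self_pos.2 (show a 1 ≠ 0 from hi)]
  · unfold dot3; nlinarith [mul_self_pos.2 (show a 2 ≠ 0 from hi)]

lemma S14.norm3_smul (t : ℝ) (a : R3) : norm3 (t • a) = |t| * norm3 a := by
  unfold norm3
  rw [show dot3 (t • a) (t • a) = t ^ 2 * dot3 a a by simp [dot3]; ring,
    Real.sqrt_mul (sq_nonneg t), Real.sqrt_sq_eq_abs]

lemma S14.det3_smul_add_smul (r t : ℝ) (a n y z : R3) :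
    det3 (r • a + t • n) y z = r * det3 a y z + t * det3 n y z := by
  simp [det3, dot3, cross3]; ring

lemma S14.det3_smul_left (t : ℝ) (x y z : R3) : det3 (t • x) y z = t * det3 x y z := by
  simp [det3, dot3, cross3]; ring

lemma S14.det3_mid_last (x b z : R3) (c α : ℝ) :
    det3 x (c • b) (c • z + α • b) = c ^ 2 * det3 x b z := by
  simp [det3, dot3, cross3]; ring

lemma S14.hd_dot3 {f g : ℝ → R3} {f' g' : R3} {s : ℝ}
    (hf : HasDerivAt f f' s) (hg : HasDerivAt g g' s) :
    HasDerivAt (fun t => dot3 (f t) (g t)) (dot3 f' (g s) + dot3 (f s) g') s := by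
  have h := (((hasDerivAt_pi.1 hf 0).mul (hasDerivAt_pi.1 hg 0)).add
    ((hasDerivAt_pi.1 hf 1).mul (hasDerivAt_pi.1 hg 1))).add
    ((hasDerivAt_pi.1 hf 2).mul (hasDerivAt_pi.1 hg 2))
  refine h.congr_deriv ?_
  simp [dot3]; ring

lemma S14.hd_cross3 {f g : ℝ → R3} {f' g' : R3} {s : ℝ}
    (hf : HasDerivAt f f' s) (hg : HasDerivAt g g' s) :
    HasDerivAt (fun t => cross3 (f t) (g t)) (cross3 f' (g s) + cross3 (f s) g') s := by
  rw [hasDerivAt_pi]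
  intro i
  fin_cases i
  · have h := ((hasDerivAt_pi.1 hf 1).mul (hasDerivAt_pi.1 hg 2)).sub
      ((hasDerivAt_pi.1 hf 2).mul (hasDerivAt_pi.1 hg 1))
    show HasDerivAt (fun t => cross3 (f t) (g t) 0) ((cross3 f' (g s) + cross3 (f s) g') 0) s
    refine h.congr_deriv ?_
    simp [cross3]; ring
  · have h := ((hasDerivAt_pi.1 hf 2).mul (hasDerivAt_pi.1 hg 0)).sub
      ((hasDerivAt_pi.1 hf 0).mul (hasDerivAt_pi.1 hg 2))
    show HasDerivAt (fun t => cross3 (f t) (g t) 1) ((cross3 f' (g s) + cross3 (f s) g') 1) s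
    refine h.congr_deriv ?_
    simp [cross3]; ring
  · have h := ((hasDerivAt_pi.1 hf 0).mul (hasDerivAt_pi.1 hg 1)).sub
      ((hasDerivAt_pi.1 hf 1).mul (hasDerivAt_pi.1 hg 0))
    show HasDerivAt (fun t => cross3 (f t) (g t) 2) ((cross3 f' (g s) + cross3 (f s) g') 2) s
    refine h.congr_deriv ?_
    simp [cross3]; ring

lemma S14.cd_dot3 {f g : ℝ → R3} (hf : ContDiff ℝ (⊤ : ℕ∞) f) (hg : ContDiff ℝ (⊤ : ℕ∞) g) :
    ContDiff ℝ (⊤ : ℕ∞) fun s => dot3 (f s) (g s) := by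
  unfold dot3
  exact (((contDiff_pi.1 hf 0).mul (contDiff_pi.1 hg 0)).add
    ((contDiff_pi.1 hf 1).mul (contDiff_pi.1 hg 1))).add
    ((contDiff_pi.1 hf 2).mul (contDiff_pi.1 hg 2))

lemma S14.cd_cross3 {f g : ℝ → R3} (hf : ContDiff ℝ (⊤ : ℕ∞) f) (hg : ContDiff ℝ (⊤ : ℕ∞) g) :
    ContDiff ℝ (⊤ : ℕ∞) fun s => cross3 (f s) (g s) := by
  rw [contDiff_pi]
  intro i
  fin_cases i
  · show ContDiff ℝ (⊤ : ℕ∞) fun t => cross3 (f t) (g t) 0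
    simp only [cross3, Matrix.cons_val_zero]
    exact ((contDiff_pi.1 hf 1).mul (contDiff_pi.1 hg 2)).sub
      ((contDiff_pi.1 hf 2).mul (contDiff_pi.1 hg 1))
  · show ContDiff ℝ (⊤ : ℕ∞) fun t => cross3 (f t) (g t) 1
    simp only [cross3, Matrix.cons_val_one, Matrix.head_cons]
    exact ((contDiff_pi.1 hf 2).mul (contDiff_pi.1 hg 0)).sub
      ((contDiff_pi.1 hf 0).mul (contDiff_pi.1 hg 2))
  · show ContDiff ℝ (⊤ : ℕ∞) fun t => cross3 (f t) (g t) 2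
    simp only [cross3, Matrix.cons_val_two, Matrix.tail_cons, Matrix.head_cons]
    exact ((contDiff_pi.1 hf 0).mul (contDiff_pi.1 hg 1)).sub
      ((contDiff_pi.1 hf 1).mul (contDiff_pi.1 hg 0))

namespace S14
variable {γ : ℝ → R3} (hγ : IsRegularCurve γ)

lemma smooth_succ (f : ℝ → R3) (h : ContDiff ℝ (⊤ : ℕ∞) f) :
    ContDiff ℝ (((⊤ : ℕ∞) : WithTop ℕ∞) + 1) f := by
  exact h.of_le (by exact_mod_cast le_top)

include hγ

lemma cd1 : ContDiff ℝ (⊤ : ℕ∞) (deriv γ) :=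
  (contDiff_succ_iff_deriv.mp (smooth_succ γ hγ.smooth)).2.2

lemma cd2 : ContDiff ℝ (⊤ : ℕ∞) (deriv (deriv γ)) :=
  (contDiff_succ_iff_deriv.mp (smooth_succ _ (cd1 hγ))).2.2

lemma hdγ (s : ℝ) : HasDerivAt γ (deriv γ s) s :=
  ((hγ.smooth.differentiable (by simp)) s).hasDerivAt

lemma hdD1 (s : ℝ) : HasDerivAt (deriv γ) (deriv (deriv γ) s) s :=
  (((cd1 hγ).differentiable (by simp)) s).hasDerivAt

lemma qpos (s : ℝ) : 0 < dot3 (deriv γ s) (deriv γ s) := dot3_pos (hγ.reg s)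

lemma vpos (s : ℝ) : 0 < norm3 (deriv γ s) := Real.sqrt_pos.2 (qpos hγ s)

lemma vsq (s : ℝ) : norm3 (deriv γ s) ^ 2 = dot3 (deriv γ s) (deriv γ s) :=
  Real.sq_sqrt (qpos hγ s).le

lemma hortho (s : ℝ) : dot3 (γ s) (deriv γ s) = 0 := by
  have h1 : HasDerivAt (fun t => dot3 (γ t) (γ t))
      (dot3 (deriv γ s) (γ s) + dot3 (γ s) (deriv γ s)) s := hd_dot3 (hdγ hγ s) (hdγ hγ s)
  have h2 : (fun t => dot3 (γ t) (γ t)) = fun _ => (1 : ℝ) := funext hγ.sphere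
  rw [h2] at h1
  have h3 := h1.unique (hasDerivAt_const s 1)
  have h4 := dot3_comm (deriv γ s) (γ s)
  linarith

lemma hortho2 (s : ℝ) :
    dot3 (γ s) (deriv (deriv γ) s) = -dot3 (deriv γ s) (deriv γ s) := by
  have h1 : HasDerivAt (fun t => dot3 (γ t) (deriv γ t))
      (dot3 (deriv γ s) (deriv γ s) + dot3 (γ s) (deriv (deriv γ) s)) s :=
    hd_dot3 (hdγ hγ s) (hdD1 hγ s)
  have h2 : (fun t => dot3 (γ t) (deriv γ t)) = fun _ => (0 : ℝ) := funext (hortho hγ)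
  rw [h2] at h1
  have h3 := h1.unique (hasDerivAt_const s 0)
  linarith

lemma hdv (s : ℝ) : HasDerivAt (fun t => norm3 (deriv γ t))
    (dot3 (deriv γ s) (deriv (deriv γ) s) / norm3 (deriv γ s)) s := by
  have hq : HasDerivAt (fun t => dot3 (deriv γ t) (deriv γ t))
      (dot3 (deriv (deriv γ) s) (deriv γ s) + dot3 (deriv γ s) (deriv (deriv γ) s)) s :=
    hd_dot3 (hdD1 hγ s) (hdD1 hγ s)
  have h := hq.sqrt (ne_of_gt (qpos hγ s))
  refine h.congr_deriv ?_
  rw [dot3_comm (deriv (deriv γ) s) (deriv γ s)]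
  have hs : Real.sqrt (dot3 (deriv γ s) (deriv γ s)) ≠ 0 := by
    have := vpos hγ s; unfold norm3 at this; exact ne_of_gt this
  unfold norm3
  field_simp
  ring

omit hγ in
lemma dot3_smul_right (t : ℝ) (a b : R3) : dot3 a (t • b) = t * dot3 a b := by
  simp [dot3]; ring

omit hγ in
lemma val_eq (a b c : R3) (v : ℝ) (hvne : v ≠ 0) (hq : dot3 b b = v ^ 2)
    (hab : dot3 a b = 0) :
    (-(dot3 a (cross3 b c) / v ^ 3)) • b =
      v⁻¹ • cross3 a c + (-(dot3 b c / v) / v ^ 2) • cross3 a b := by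
  have s1 : (v : ℝ)⁻¹ = (v ^ 3)⁻¹ * dot3 b b := by rw [hq]; field_simp
  have s2 : -(dot3 b c / v) / v ^ 2 = (v ^ 3)⁻¹ * -dot3 b c := by
    rw [← neg_div, div_div, show v * v ^ 2 = v ^ 3 by ring, div_eq_inv_mul]
  rw [s1, s2]
  linear_combination (norm := module) (-(v ^ 3)⁻¹ : ℝ) • key_vec a b c hab

lemma hdn (s : ℝ) : HasDerivAt (unitNormal γ) (-(kappa γ s) • deriv γ s) s := by
  have hvne : norm3 (deriv γ s) ≠ 0 := ne_of_gt (vpos hγ s)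
  have hinv : HasDerivAt (fun t => (norm3 (deriv γ t))⁻¹)
      (-(dot3 (deriv γ s) (deriv (deriv γ) s) / norm3 (deriv γ s)) / norm3 (deriv γ s) ^ 2) s :=
    (hdv hγ s).inv hvne
  have hcr : HasDerivAt (fun t => cross3 (γ t) (deriv γ t))
      (cross3 (deriv γ s) (deriv γ s) + cross3 (γ s) (deriv (deriv γ) s)) s :=
    hd_cross3 (hdγ hγ s) (hdD1 hγ s)
  have h := hinv.smul hcr
  have e0 : cross3 (deriv γ s) (deriv γ s) = 0 := by
    funext i; fin_cases i <;> (simp [cross3]; ring)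
  rw [e0, zero_add] at h
  refine h.congr_deriv ?_
  exact (val_eq (γ s) (deriv γ s) (deriv (deriv γ) s) (norm3 (deriv γ s)) hvne
    (vsq hγ s).symm (hortho hγ s)).symm

lemma cdv : ContDiff ℝ (⊤ : ℕ∞) fun s => norm3 (deriv γ s) := by
  rw [contDiff_iff_contDiffAt]
  intro s
  have h := (cd_dot3 (cd1 hγ) (cd1 hγ)).contDiffAt (x := s)
  exact (Real.contDiffAt_sqrt (ne_of_gt (qpos hγ s))).comp s h

lemma cdn : ContDiff ℝ (⊤ : ℕ∞) (unitNormal γ) :=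
  ((cdv hγ).inv fun s => ne_of_gt (vpos hγ s)).smul (cd_cross3 hγ.smooth (cd1 hγ))

lemma cdκ : ContDiff ℝ (⊤ : ℕ∞) (kappa γ) := by
  unfold kappa det3
  exact (cd_dot3 hγ.smooth (cd_cross3 (cd1 hγ) (cd2 hγ))).div
    ((cdv hγ).pow 3) fun s => pow_ne_zero 3 (ne_of_gt (vpos hγ s))

lemma hdP (θ : ℝ) (s : ℝ) : HasDerivAt (parallelCurve γ θ)
    ((Real.cos θ - kappa γ s * Real.sin θ) • deriv γ s) s := by
  have h := ((hdγ hγ s).const_smul (Real.cos θ)).add ((hdn hγ s).const_smul (Real.sin θ))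
  refine h.congr_deriv ?_
  module

end S14

theorem stmt14 (γ : ℝ → R3) (θ : ℝ)
    (hγ : IsRegularCurve γ)
    (hpar : ∀ s, norm3 (deriv γ s) ^ 2 * (1 + kappa γ s ^ 2) = 4)
    (hθ : ∀ s, 0 < |Real.cos θ - kappa γ s * Real.sin θ|) :
    IsRegularCurve (parallelCurve γ θ) ∧
    (∀ s, kappa (parallelCurve γ θ) s =
      (Real.sin θ + kappa γ s * Real.cos θ) / |Real.cos θ - kappa γ s * Real.sin θ|) ∧
    ∀ s, norm3 (deriv (parallelCurve γ θ) s) ^ 2 *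
      (1 + kappa (parallelCurve γ θ) s ^ 2) = 4 := by
  have hdPs : ∀ s, HasDerivAt (parallelCurve γ θ)
      ((Real.cos θ - kappa γ s * Real.sin θ) • deriv γ s) s := S14.hdP hγ θ
  have hcne : ∀ s, Real.cos θ - kappa γ s * Real.sin θ ≠ 0 := fun s => abs_pos.mp (hθ s)
  have hcd : ContDiff ℝ (⊤ : ℕ∞) fun s => Real.cos θ - kappa γ s * Real.sin θ :=
    contDiff_const.sub ((S14.cdκ hγ).mul contDiff_const)
  have derivP : deriv (parallelCurve γ θ) =
      fun s => (Real.cos θ - kappa γ s * Real.sin θ) • deriv γ s :=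
    funext fun s => (hdPs s).deriv
  have hdP2 : ∀ s, HasDerivAt (deriv (parallelCurve γ θ))
      ((Real.cos θ - kappa γ s * Real.sin θ) • deriv (deriv γ) s +
        deriv (fun t => Real.cos θ - kappa γ t * Real.sin θ) s • deriv γ s) s := by
    intro s
    rw [derivP]
    exact ((hcd.differentiable (by simp) s).hasDerivAt).smul (S14.hdD1 hγ s)
  have hreg : IsRegularCurve (parallelCurve γ θ) := by
    constructor
    · exact (hγ.smooth.const_smul (Real.cos θ)).add ((S14.cdn hγ).const_smul (Real.sin θ))
    · intro s
      have hn0 : dot3 (γ s) (unitNormal γ s) = 0 := by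
        unfold unitNormal
        rw [S14.dot3_smul_right, S14.dot3_self_cross, mul_zero]
      have hnn : dot3 (unitNormal γ s) (unitNormal γ s) = 1 := by
        unfold unitNormal
        rw [S14.dot3_smul_smul, S14.lagrange, hγ.sphere s, S14.hortho hγ s, ← S14.vsq hγ s]
        field_simp [ne_of_gt (S14.vpos hγ s)]
        ring
      have hexp : ∀ (r t : ℝ) (x y : R3), dot3 (r • x + t • y) (r • x + t • y)
          = r ^ 2 * dot3 x x + 2 * (r * t) * dot3 x y + t ^ 2 * dot3 y y := by
        intro r t x y; simp [dot3]; ring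
      show dot3 (Real.cos θ • γ s + Real.sin θ • unitNormal γ s)
        (Real.cos θ • γ s + Real.sin θ • unitNormal γ s) = 1
      rw [hexp, hγ.sphere s, hn0, hnn]
      linear_combination Real.sin_sq_add_cos_sq θ
    · intro s
      rw [(hdPs s).deriv]
      exact smul_ne_zero (hcne s) (hγ.reg s)
  have hk : ∀ s, kappa (parallelCurve γ θ) s =
      (Real.sin θ + kappa γ s * Real.cos θ) / |Real.cos θ - kappa γ s * Real.sin θ| := by
    intro s
    have hvne : norm3 (deriv γ s) ≠ 0 := ne_of_gt (S14.vpos hγ s)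
    have hd : det3 (γ s) (deriv γ s) (deriv (deriv γ) s) =
        kappa γ s * norm3 (deriv γ s) ^ 3 := by
      unfold kappa; field_simp
    have hnbc : det3 (unitNormal γ s) (deriv γ s) (deriv (deriv γ) s) =
        norm3 (deriv γ s) ^ 3 := by
      unfold unitNormal
      rw [S14.det3_smul_left]
      show (norm3 (deriv γ s))⁻¹ *
        dot3 (cross3 (γ s) (deriv γ s)) (cross3 (deriv γ s) (deriv (deriv γ) s)) = _
      rw [S14.lagrange, S14.hortho hγ s, S14.hortho2 hγ s, ← S14.vsq hγ s]
      field_simp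
      ring
    calc kappa (parallelCurve γ θ) s
        = det3 (parallelCurve γ θ s) (deriv (parallelCurve γ θ) s)
            (deriv (deriv (parallelCurve γ θ)) s) / norm3 (deriv (parallelCurve γ θ) s) ^ 3 := rfl
      _ = (Real.sin θ + kappa γ s * Real.cos θ) / |Real.cos θ - kappa γ s * Real.sin θ| := by
          rw [(hdPs s).deriv, (hdP2 s).deriv, S14.det3_mid_last, S14.norm3_smul]
          show (Real.cos θ - kappa γ s * Real.sin θ) ^ 2 *
              det3 (Real.cos θ • γ s + Real.sin θ • unitNormal γ s) (deriv γ s)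
                (deriv (deriv γ) s) / _ = _
          rw [S14.det3_smul_add_smul, hd, hnbc, mul_pow,
            show |Real.cos θ - kappa γ s * Real.sin θ| ^ 3 =
              (Real.cos θ - kappa γ s * Real.sin θ) ^ 2 *
                |Real.cos θ - kappa γ s * Real.sin θ| by rw [pow_succ, sq_abs]]
          field_simp [abs_pos.mpr (hcne s), hcne s, hvne]
          ring
  refine ⟨hreg, hk, fun s => ?_⟩
  have habs : |Real.cos θ - kappa γ s * Real.sin θ| ≠ 0 := ne_of_gt (hθ s)
  rw [hk s, (hdPs s).deriv, S14.norm3_smul, mul_pow, div_pow, sq_abs]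
  have h4 := hpar s
  have hpy := Real.sin_sq_add_cos_sq θ
  field_simp [hcne s]
  linear_combination (norm3 (deriv γ s) ^ 2 * (1 + kappa γ s ^ 2)) * hpy + h4
end
end
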